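/- arXiv:1808.09674 — 7 statements merged into one kernel-verified Lean document; each statement's English description precedes it below -/
import Mathlib

section
/- For integers r ≥ 1 and s ≥ 2, the modified double zeta value satisfies ζ̂(r,s) = 2^{s-1}(Li_{r,s}(−1) + ζ(r,s)) − ζ(r,s) − ζ(r+s), where Li_{r,s}(z) = ∑_{0<m<n} z^n/(m^r n^s), ζ(r,s) = ∑_{0<m<n} 1/(m^r n^s), and ζ(k) = ∑_{n>0} 1/n^k. -/
open Function

namespace ZHaux

noncomputable def TS (r s : ℕ) (p : ℕ × ℕ) : ℝ :=
  if 0 < p.1 ∧ p.1 < 2 * p.2 then 1 / ((p.1 : ℝ) ^ r * (p.2 : ℝ) ^ s) else 0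

noncomputable def dzS (r s : ℕ) (p : ℕ × ℕ) : ℝ :=
  if 0 < p.1 ∧ p.1 < p.2 then 1 / ((p.1 : ℝ) ^ r * (p.2 : ℝ) ^ s) else 0

noncomputable def liS (r s : ℕ) (p : ℕ × ℕ) : ℝ :=
  if 0 < p.1 ∧ p.1 < p.2 then (-1 : ℝ) ^ p.2 / ((p.1 : ℝ) ^ r * (p.2 : ℝ) ^ s) else 0

noncomputable def diagS (r s : ℕ) (p : ℕ × ℕ) : ℝ :=
  if 0 < p.1 ∧ p.1 = p.2 then 1 / ((p.1 : ℝ) ^ r * (p.2 : ℝ) ^ s) else 0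

noncomputable def zhS (r s : ℕ) (p : ℕ × ℕ) : ℝ :=
  if p.2 < p.1 ∧ p.1 < 2 * p.2 then 1 / ((p.1 : ℝ) ^ r * (p.2 : ℝ) ^ s) else 0

noncomputable def evS (r s : ℕ) (p : ℕ × ℕ) : ℝ :=
  if 0 < p.1 ∧ p.1 < p.2 ∧ Even p.2 then 1 / ((p.1 : ℝ) ^ r * (p.2 : ℝ) ^ s) else 0

lemma TS_nonneg (r s : ℕ) (p : ℕ × ℕ) : 0 ≤ TS r s p := by
  unfold TS; split_ifs with h
  · positivity
  · exact le_refl 0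

lemma rpow32 (n : ℕ) : (n : ℝ) ^ (3/2 : ℝ) = n * Real.sqrt n := by
  rcases Nat.eq_zero_or_pos n with h | h
  · subst h; simp
  · have hn : (0 : ℝ) < n := by exact_mod_cast h
    rw [show (3/2 : ℝ) = 1 + 1/2 by norm_num, Real.rpow_add hn, Real.rpow_one,
      ← Real.sqrt_eq_rpow]

lemma summable_TS (r s : ℕ) (hr : 1 ≤ r) (hs : 2 ≤ s) : Summable (TS r s) := by
  have h32 : Summable (fun n : ℕ => 1 / (n : ℝ) ^ (3/2 : ℝ)) :=
    Real.summable_one_div_nat_rpow.mpr (by norm_num)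
  have hprod : Summable (fun p : ℕ × ℕ =>
      (Real.sqrt 2 * (1 / (p.1 : ℝ) ^ (3/2 : ℝ))) * (1 / (p.2 : ℝ) ^ (3/2 : ℝ))) := by
    refine Summable.mul_of_nonneg (f := fun n : ℕ => Real.sqrt 2 * (1 / (n : ℝ) ^ (3/2 : ℝ)))
      (g := fun n : ℕ => 1 / (n : ℝ) ^ (3/2 : ℝ)) (h32.mul_left _) h32 ?_ ?_ <;>
      intro n <;> positivity
  refine hprod.of_nonneg_of_le (TS_nonneg r s) ?_
  rintro ⟨m, k⟩
  unfold TS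
  split_ifs with h
  · obtain ⟨hm, hmk⟩ := h
    have hk : 1 ≤ k := by omega
    have hm1 : (1 : ℝ) ≤ (m : ℝ) := by exact_mod_cast hm
    have hk1 : (1 : ℝ) ≤ (k : ℝ) := by exact_mod_cast hk
    have hmk' : (m : ℝ) ≤ 2 * k := by exact_mod_cast hmk.le
    have hsm : (0 : ℝ) < Real.sqrt m := Real.sqrt_pos.mpr (by linarith)
    have hsk : (0 : ℝ) < Real.sqrt k := Real.sqrt_pos.mpr (by linarith)
    have hskk : Real.sqrt k * Real.sqrt k = k := Real.mul_self_sqrt (by linarith)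
    have h2 : Real.sqrt m ≤ Real.sqrt 2 * Real.sqrt k := by
      rw [← Real.sqrt_mul (by norm_num)]
      exact Real.sqrt_le_sqrt hmk'
    have step1 : 1 / ((m : ℝ) ^ r * (k : ℝ) ^ s) ≤ 1 / ((m : ℝ) * (k : ℝ) ^ 2) := by
      apply one_div_le_one_div_of_le (by positivity)
      calc (m : ℝ) * (k : ℝ) ^ 2 = (m : ℝ) ^ 1 * (k : ℝ) ^ 2 := by ring
        _ ≤ (m : ℝ) ^ r * (k : ℝ) ^ s := by
            apply mul_le_mul (pow_le_pow_right₀ hm1 hr) (pow_le_pow_right₀ hk1 hs)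
              (by positivity) (by positivity)
    have step2 : 1 / ((m : ℝ) * (k : ℝ) ^ 2) ≤
        Real.sqrt 2 * (1 / (m : ℝ) ^ (3/2 : ℝ)) * (1 / (k : ℝ) ^ (3/2 : ℝ)) := by
      rw [rpow32, rpow32]
      rw [show Real.sqrt 2 * (1 / ((m : ℝ) * Real.sqrt m)) * (1 / ((k : ℝ) * Real.sqrt k))
          = Real.sqrt 2 / (((m : ℝ) * Real.sqrt m) * ((k : ℝ) * Real.sqrt k)) by ring]
      rw [div_le_div_iff₀ (by positivity) (by positivity)]
      calc 1 * ((m : ℝ) * Real.sqrt m * ((k : ℝ) * Real.sqrt k))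
          = Real.sqrt m * ((m : ℝ) * k * Real.sqrt k) := by ring
        _ ≤ (Real.sqrt 2 * Real.sqrt k) * ((m : ℝ) * k * Real.sqrt k) :=
            mul_le_mul_of_nonneg_right h2 (by positivity)
        _ = Real.sqrt 2 * ((m : ℝ) * k * (Real.sqrt k * Real.sqrt k)) := by ring
        _ = Real.sqrt 2 * ((m : ℝ) * k * k) := by rw [hskk]
        _ = Real.sqrt 2 * ((m : ℝ) * (k : ℝ) ^ 2) := by ring
    linarith
  · positivity

lemma dzS_le (r s : ℕ) (p : ℕ × ℕ) : 0 ≤ dzS r s p ∧ dzS r s p ≤ TS r s p := by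
  unfold dzS TS
  split_ifs <;>
    first
      | exact ⟨by positivity, le_refl _⟩
      | (exfalso; omega)
      | exact ⟨le_refl 0, by positivity⟩

lemma diagS_le (r s : ℕ) (p : ℕ × ℕ) : 0 ≤ diagS r s p ∧ diagS r s p ≤ TS r s p := by
  unfold diagS TS
  split_ifs <;>
    first
      | exact ⟨by positivity, le_refl _⟩
      | (exfalso; omega)
      | exact ⟨le_refl 0, by positivity⟩

lemma zhS_le (r s : ℕ) (p : ℕ × ℕ) : 0 ≤ zhS r s p ∧ zhS r s p ≤ TS r s p := by
  unfold zhS TS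
  split_ifs <;>
    first
      | exact ⟨by positivity, le_refl _⟩
      | (exfalso; omega)
      | exact ⟨le_refl 0, by positivity⟩

variable {r s : ℕ}

lemma summable_dzS (hr : 1 ≤ r) (hs : 2 ≤ s) : Summable (dzS r s) :=
  (summable_TS r s hr hs).of_nonneg_of_le (fun p => (dzS_le r s p).1) (fun p => (dzS_le r s p).2)

lemma summable_diagS (hr : 1 ≤ r) (hs : 2 ≤ s) : Summable (diagS r s) :=
  (summable_TS r s hr hs).of_nonneg_of_le (fun p => (diagS_le r s p).1)
    (fun p => (diagS_le r s p).2)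

lemma summable_zhS (hr : 1 ≤ r) (hs : 2 ≤ s) : Summable (zhS r s) :=
  (summable_TS r s hr hs).of_nonneg_of_le (fun p => (zhS_le r s p).1) (fun p => (zhS_le r s p).2)

lemma summable_liS (hr : 1 ≤ r) (hs : 2 ≤ s) : Summable (liS r s) := by
  apply Summable.of_abs
  have habs : (fun p => |liS r s p|) = dzS r s := by
    funext p
    unfold liS dzS
    split_ifs with h
    · rw [abs_div, abs_pow, abs_neg, abs_one, one_pow]
      congr 1
      rw [abs_of_nonneg (by positivity)]
    · exact abs_zero
  rw [habs]
  exact summable_dzS hr hs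

lemma TS_split (p : ℕ × ℕ) : TS r s p = dzS r s p + diagS r s p + zhS r s p := by
  unfold TS dzS diagS zhS
  split_ifs <;> first | (exfalso; omega) | ring

lemma li_add_dz (p : ℕ × ℕ) : liS r s p + dzS r s p = 2 * evS r s p := by
  unfold liS dzS evS
  by_cases h : 0 < p.1 ∧ p.1 < p.2
  · rcases Nat.even_or_odd p.2 with he | ho
    · rw [if_pos h, if_pos h, if_pos ⟨h.1, h.2, he⟩, he.neg_one_pow]
      ring
    · rw [if_pos h, if_pos h, if_neg (by simp [Nat.not_even_iff_odd.mpr ho]),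
        ho.neg_one_pow]
      ring
  · rw [if_neg h, if_neg h, if_neg (by tauto)]
    ring

/-- change of variable `n = 2k` on the even part. -/
lemma ev_eq : ∑' p : ℕ × ℕ, evS r s p = (2 ^ s : ℝ)⁻¹ * ∑' p : ℕ × ℕ, TS r s p := by
  have h1 : ∑' p : ℕ × ℕ, evS r s p = ∑' p : ℕ × ℕ,
      (if 0 < p.1 ∧ p.1 < 2 * p.2 then
        1 / ((p.1 : ℝ) ^ r * ((2 * p.2 : ℕ) : ℝ) ^ s) else 0) := by
    apply tsum_eq_tsum_of_ne_zero_bij (fun x => (x.1.1, 2 * x.1.2))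
    · rintro ⟨⟨a, b⟩, ha⟩ ⟨⟨c, d⟩, hc⟩ h
      simp only [Prod.mk.injEq] at h
      simp only [Subtype.mk.injEq, Prod.mk.injEq]
      omega
    · rintro ⟨m, n⟩ hmn
      rw [mem_support] at hmn
      have hcond : 0 < m ∧ m < n ∧ Even n := by
        by_contra hc
        exact hmn (by unfold evS; rw [if_neg hc])
      obtain ⟨hm, hmn', k, hk⟩ := hcond
      refine ⟨⟨(m, k), ?_⟩, ?_⟩
      · rw [mem_support]
        have hcond2 : 0 < (m, k).1 ∧ (m, k).1 < 2 * (m, k).2 := by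
          constructor <;> simp <;> omega
        rw [if_pos hcond2]
        have hm' : (0 : ℝ) < (m : ℝ) := by exact_mod_cast hm
        have hk' : (0 : ℝ) < ((2 * k : ℕ) : ℝ) := by
          have h2k : 0 < 2 * k := by omega
          exact_mod_cast h2k
        positivity
      · show (m, 2 * k) = (m, n)
        simp only [Prod.mk.injEq]
        exact ⟨trivial, by omega⟩
    · rintro ⟨⟨m, k⟩, h⟩
      rw [mem_support] at h
      have hcond : 0 < (m, k).1 ∧ (m, k).1 < 2 * (m, k).2 := by
        by_contra hc
        exact h (by rw [if_neg hc])
      show evS r s (m, 2 * k) = _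
      unfold evS
      rw [if_pos, if_pos hcond]
      refine ⟨by simpa using hcond.1, ?_, ⟨k, by omega⟩⟩
      simpa using hcond.2
  rw [h1, ← tsum_mul_left]
  apply tsum_congr
  intro p
  unfold TS
  split_ifs with h
  · have hm : 0 < p.1 := h.1
    have hk : 0 < p.2 := by omega
    have hmr : ((p.1 : ℝ)) ^ r ≠ 0 := by positivity
    have hkr : ((p.2 : ℝ)) ^ s ≠ 0 := by positivity
    push_cast
    rw [mul_pow]
    field_simp
  · rw [mul_zero]

lemma diag_eq :
    ∑' p : ℕ × ℕ, diagS r s p = ∑' n : ℕ, (if 0 < n then 1 / (n : ℝ) ^ (r + s) else 0) := by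
  apply tsum_eq_tsum_of_ne_zero_bij (fun x => (x.1, x.1))
  · rintro ⟨a, ha⟩ ⟨b, hb⟩ h
    simp only [Prod.mk.injEq] at h
    simp only [Subtype.mk.injEq]
    exact h.1
  · rintro ⟨m, n⟩ hmn
    rw [mem_support] at hmn
    have hcond : 0 < m ∧ m = n := by
      by_contra hc
      exact hmn (by unfold diagS; rw [if_neg hc])
    refine ⟨⟨m, ?_⟩, ?_⟩
    · rw [mem_support, if_pos hcond.1]
      have hm : (0 : ℝ) < (m : ℝ) := by exact_mod_cast hcond.1
      positivity
    · show (m, m) = (m, n)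
      simp only [Prod.mk.injEq]
      exact ⟨trivial, hcond.2⟩
  · rintro ⟨n, h⟩
    rw [mem_support] at h
    have hn : 0 < n := by
      by_contra hc
      exact h (by rw [if_neg hc])
    show diagS r s (n, n) = _
    unfold diagS
    rw [if_pos ⟨hn, rfl⟩, if_pos hn, pow_add]

lemma zh_eq : ∑' p : ℕ × ℕ, zhS r s p = ∑' p : ℕ × ℕ,
    (if 0 < p.1 ∧ p.1 < p.2 then
      1 / (((p.1 : ℝ) + (p.2 : ℝ)) ^ r * (p.2 : ℝ) ^ s) else 0) := by
  apply tsum_eq_tsum_of_ne_zero_bij (fun x => (x.1.1 + x.1.2, x.1.2))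
  · rintro ⟨⟨a, b⟩, ha⟩ ⟨⟨c, d⟩, hc⟩ h
    simp only [Prod.mk.injEq] at h
    simp only [Subtype.mk.injEq, Prod.mk.injEq]
    omega
  · rintro ⟨a, b⟩ hab
    rw [mem_support] at hab
    have hcond : b < a ∧ a < 2 * b := by
      by_contra hc
      exact hab (by unfold zhS; rw [if_neg hc])
    refine ⟨⟨(a - b, b), ?_⟩, ?_⟩
    · rw [mem_support]
      have hcond2 : 0 < (a - b, b).1 ∧ (a - b, b).1 < (a - b, b).2 := by
        constructor <;> simp <;> omega
      rw [if_pos hcond2]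
      have h1 : (1 : ℝ) ≤ ((a - b : ℕ) : ℝ) := by
        have : 1 ≤ a - b := by omega
        exact_mod_cast this
      have h2 : (1 : ℝ) ≤ (b : ℝ) := by
        have : 1 ≤ b := by omega
        exact_mod_cast this
      have hbase : (0 : ℝ) < ((a - b : ℕ) : ℝ) + (b : ℝ) := by linarith
      have hb : (0 : ℝ) < (b : ℝ) := by linarith
      positivity
    · show (a - b + b, b) = (a, b)
      simp only [Prod.mk.injEq]
      exact ⟨by omega, trivial⟩
  · rintro ⟨⟨m, n⟩, h⟩
    rw [mem_support] at h
    have hcond : 0 < (m, n).1 ∧ (m, n).1 < (m, n).2 := by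
      by_contra hc
      exact h (by rw [if_neg hc])
    show zhS r s (m + n, n) = _
    unfold zhS
    have hc2 : (m + n, n).2 < (m + n, n).1 ∧ (m + n, n).1 < 2 * (m + n, n).2 := by
      constructor <;> simp <;> omega
    rw [if_pos hc2, if_pos hcond]
    show 1 / (((m + n : ℕ) : ℝ) ^ r * (n : ℝ) ^ s) = _
    push_cast
    ring

end ZHaux


/-- The modified double zeta value `ζ̂(r,s) = ∑_{0<m<n} 1/((m+n)^r n^s)`. -/
noncomputable def zetaHat (r s : ℕ) : ℝ :=
  ∑' p : ℕ × ℕ, if 0 < p.1 ∧ p.1 < p.2 then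
    1 / (((p.1 : ℝ) + (p.2 : ℝ)) ^ r * (p.2 : ℝ) ^ s) else 0

/-- The double zeta value `ζ(r,s) = ∑_{0<m<n} 1/(m^r n^s)`. -/
noncomputable def doubleZeta (r s : ℕ) : ℝ :=
  ∑' p : ℕ × ℕ, if 0 < p.1 ∧ p.1 < p.2 then
    1 / ((p.1 : ℝ) ^ r * (p.2 : ℝ) ^ s) else 0

/-- The double polylogarithm at `-1`: `Li_{r,s}(-1) = ∑_{0<m<n} (-1)^n/(m^r n^s)`. -/
noncomputable def doubleLiNegOne (r s : ℕ) : ℝ :=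
  ∑' p : ℕ × ℕ, if 0 < p.1 ∧ p.1 < p.2 then
    (-1 : ℝ) ^ p.2 / ((p.1 : ℝ) ^ r * (p.2 : ℝ) ^ s) else 0

/-- The Riemann zeta value `ζ(k) = ∑_{n>0} 1/n^k`. -/
noncomputable def zetaVal (k : ℕ) : ℝ :=
  ∑' n : ℕ, if 0 < n then 1 / (n : ℝ) ^ k else 0

/-- ζ̂(r,s) = 2^{s-1}(Li_{r,s}(-1) + ζ(r,s)) - ζ(r,s) - ζ(r+s). -/
theorem zetaHat_eq (r s : ℕ) (hr : 1 ≤ r) (hs : 2 ≤ s) :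
    zetaHat r s =
      2 ^ (s - 1) * (doubleLiNegOne r s + doubleZeta r s) - doubleZeta r s
        - zetaVal (r + s) := by
  open ZHaux in
  have hdz : doubleZeta r s = ∑' p : ℕ × ℕ, dzS r s p := rfl
  have hli : doubleLiNegOne r s = ∑' p : ℕ × ℕ, liS r s p := rfl
  have hzh : zetaHat r s = ∑' p : ℕ × ℕ, zhS r s p := (zh_eq).symm
  have hzv : zetaVal (r + s) = ∑' p : ℕ × ℕ, diagS r s p := (diag_eq).symm
  -- Li + dz = 2 * ∑ evS
  have e1 : doubleLiNegOne r s + doubleZeta r s = 2 * ∑' p : ℕ × ℕ, evS r s p := by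
    rw [hli, hdz, ← Summable.tsum_add (summable_liS hr hs) (summable_dzS hr hs), ← tsum_mul_left]
    exact tsum_congr fun p => li_add_dz p
  -- splitting of T
  have e2 : ∑' p : ℕ × ℕ, TS r s p =
      (∑' p : ℕ × ℕ, dzS r s p) + (∑' p : ℕ × ℕ, diagS r s p) + ∑' p : ℕ × ℕ, zhS r s p := by
    calc ∑' p : ℕ × ℕ, TS r s p
        = ∑' p : ℕ × ℕ, (dzS r s p + diagS r s p + zhS r s p) := tsum_congr fun p => TS_split p
      _ = _ := by
          rw [Summable.tsum_add ((summable_dzS hr hs).add (summable_diagS hr hs)) (summable_zhS hr hs),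
            Summable.tsum_add (summable_dzS hr hs) (summable_diagS hr hs)]
  have e3 : (2 : ℝ) ^ (s - 1) * (doubleLiNegOne r s + doubleZeta r s)
      = ∑' p : ℕ × ℕ, TS r s p := by
    rw [e1, ev_eq]
    have h2s : (2 : ℝ) ^ (s - 1) * 2 = 2 ^ s := by
      rw [← pow_succ]
      congr 1
      omega
    have h2ne : ((2 : ℝ) ^ s) ≠ 0 := by positivity
    field_simp
    rw [← h2s]
  rw [hzh, hzv, e3, e2, hdz]
  ring
end

section
/- For every integer k ≥ 3, the sum formula for modified double zeta values holds: ζ(k) = 2^{k−1} ∑_{r+s=k, r≥1, s≥2} ζ̂(r,s). -/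
section Aux

/-- ENNReal version of `zetaHat`. -/
noncomputable def zetaHatE (r s : ℕ) : ENNReal :=
  ∑' p : ℕ × ℕ, if 0 < p.1 ∧ p.1 < p.2 then
    ENNReal.ofReal (1 / (((p.1 : ℝ) + (p.2 : ℝ)) ^ r * (p.2 : ℝ) ^ s)) else 0

/-- ENNReal version of `zetaVal`. -/
noncomputable def zetaValE (k : ℕ) : ENNReal :=
  ∑' n : ℕ, if 0 < n then ENNReal.ofReal (1 / (n : ℝ) ^ k) else 0

lemma zetaHat_eq_toReal (r s : ℕ) : zetaHat r s = (zetaHatE r s).toReal := by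
  rw [zetaHat, zetaHatE, ENNReal.tsum_toReal_eq (fun p => by split_ifs <;> simp [ENNReal.mul_eq_top])]
  apply tsum_congr; intro p
  split_ifs with h
  · exact (ENNReal.toReal_ofReal (by positivity)).symm
  · simp

lemma zetaVal_eq_toReal (k : ℕ) : zetaVal k = (zetaValE k).toReal := by
  rw [zetaVal, zetaValE, ENNReal.tsum_toReal_eq (fun n => by split_ifs <;> simp)]
  apply tsum_congr; intro n
  split_ifs with h
  · exact (ENNReal.toReal_ofReal (by positivity)).symm
  · simp

lemma geomAux (a b : ℝ) (ha : 0 < a) (hb : 0 < b) (j : ℕ) :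
    ∑ r ∈ Finset.Icc 1 j, 1/((a+b)^r * b^(j+2-r))
      = 1/(a*b^(j+1)) - 1/(a*(a+b)^(j+1)) - 1/(b*(a+b)^(j+1)) := by
  have hab : (0:ℝ) < a + b := by linarith
  induction j with
  | zero =>
    simp only [Finset.Icc_self, Finset.Icc_eq_empty_of_lt (by norm_num : (1:ℕ) > 0)]
    field_simp
    ring
  | succ j ih =>
    rw [Finset.sum_Icc_succ_top (by omega)]
    have hstep : ∀ r ∈ Finset.Icc 1 j,
        1/((a+b)^r * b^(j+1+2-r)) = 1/((a+b)^r * b^(j+2-r)) * (1/b) := by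
      intro r hr
      rw [Finset.mem_Icc] at hr
      have h1 : j+1+2-r = (j+2-r)+1 := by omega
      rw [h1, pow_succ]
      ring
    rw [Finset.sum_congr rfl hstep, ← Finset.sum_mul, ih]
    have h2 : j+1+2-(j+1) = 2 := by omega
    rw [h2]
    have h3 : a ≠ 0 := ne_of_gt ha
    have h4 : b ≠ 0 := ne_of_gt hb
    have h5 : a + b ≠ 0 := ne_of_gt hab
    field_simp
    ring

lemma termwiseReal (k : ℕ) (hk : 3 ≤ k) (m n : ℕ) (hm : 0 < m) (hmn : m < n) :
    (∑ r ∈ Finset.Icc 1 (k-2), 1/(((m:ℝ)+(n:ℝ))^r * (n:ℝ)^(k-r)))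
      + 1/((m:ℝ)*(((m:ℝ)+(n:ℝ)))^(k-1)) + 1/((n:ℝ)*(((m:ℝ)+(n:ℝ)))^(k-1))
    = 1/((m:ℝ)*(n:ℝ)^(k-1)) := by
  obtain ⟨j, rfl⟩ : ∃ j, k = j + 2 := ⟨k-2, by omega⟩
  have ha : (0:ℝ) < m := by exact_mod_cast hm
  have hb : (0:ℝ) < n := by exact_mod_cast hm.trans hmn
  have h1 : j + 2 - 2 = j := by omega
  have h2 : j + 2 - 1 = j + 1 := by omega
  rw [h1, h2]
  have := geomAux (m:ℝ) (n:ℝ) ha hb j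
  linarith [this]

lemma tsum_shift1 (w : ℕ → ℕ → ENNReal) :
    (∑' q : ℕ×ℕ, if 0 < q.1 ∧ q.1 < q.2 then w q.1 (q.1+q.2) else 0)
    = ∑' p : ℕ×ℕ, if 0 < p.1 ∧ 2*p.1 < p.2 then w p.1 p.2 else 0 := by
  have hinj : Function.Injective (fun q : ℕ×ℕ => (q.1, q.1+q.2)) := by
    intro q r h
    simp only [Prod.mk.injEq] at h
    exact Prod.ext h.1 (by omega)
  have hsupp : Function.support
      (fun p : ℕ×ℕ => if 0 < p.1 ∧ 2*p.1 < p.2 then w p.1 p.2 else 0)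
      ⊆ Set.range (fun q : ℕ×ℕ => (q.1, q.1+q.2)) := by
    intro p hp
    simp only [Function.mem_support] at hp
    by_cases h : 0 < p.1 ∧ 2*p.1 < p.2
    · exact ⟨(p.1, p.2 - p.1), Prod.ext rfl (by simp; omega)⟩
    · rw [if_neg h] at hp; exact absurd rfl hp
  rw [← Function.Injective.tsum_eq hinj hsupp]
  exact tsum_congr fun q => if_congr (by omega) rfl rfl

lemma tsum_shift2 (w : ℕ → ℕ → ENNReal) :
    (∑' q : ℕ×ℕ, if 0 < q.1 ∧ q.1 < q.2 then w q.2 (q.1+q.2) else 0)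
    = ∑' p : ℕ×ℕ, if 0 < p.1 ∧ p.1 < p.2 ∧ p.2 < 2*p.1 then w p.1 p.2 else 0 := by
  have hinj : Function.Injective (fun q : ℕ×ℕ => (q.2, q.1+q.2)) := by
    intro q r h
    simp only [Prod.mk.injEq] at h
    exact Prod.ext (by omega) h.1
  have hsupp : Function.support
      (fun p : ℕ×ℕ => if 0 < p.1 ∧ p.1 < p.2 ∧ p.2 < 2*p.1 then w p.1 p.2 else 0)
      ⊆ Set.range (fun q : ℕ×ℕ => (q.2, q.1+q.2)) := by
    intro p hp
    simp only [Function.mem_support] at hp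
    by_cases h : 0 < p.1 ∧ p.1 < p.2 ∧ p.2 < 2*p.1
    · exact ⟨(p.2 - p.1, p.1), Prod.ext rfl (by simp; omega)⟩
    · rw [if_neg h] at hp; exact absurd rfl hp
  rw [← Function.Injective.tsum_eq hinj hsupp]
  exact tsum_congr fun q => if_congr (by omega) rfl rfl

lemma tsum_diag (w : ℕ → ℕ → ENNReal) :
    (∑' m : ℕ, if 0 < m then w m (2*m) else 0)
    = ∑' p : ℕ×ℕ, if 0 < p.1 ∧ p.2 = 2*p.1 then w p.1 p.2 else 0 := by
  have hinj : Function.Injective (fun m : ℕ => ((m, 2*m) : ℕ×ℕ)) := by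
    intro a b h
    simp only [Prod.mk.injEq] at h
    exact h.1
  have hsupp : Function.support
      (fun p : ℕ×ℕ => if 0 < p.1 ∧ p.2 = 2*p.1 then w p.1 p.2 else 0)
      ⊆ Set.range (fun m : ℕ => ((m, 2*m) : ℕ×ℕ)) := by
    intro p hp
    simp only [Function.mem_support] at hp
    by_cases h : 0 < p.1 ∧ p.2 = 2*p.1
    · exact ⟨p.1, Prod.ext rfl (by simp; omega)⟩
    · rw [if_neg h] at hp; exact absurd rfl hp
  rw [← Function.Injective.tsum_eq hinj hsupp]
  exact tsum_congr fun m => if_congr (by omega) rfl rfl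

lemma tsum_partition (w : ℕ×ℕ → ENNReal) :
    (∑' p : ℕ×ℕ, if 0 < p.1 ∧ p.1 < p.2 then w p else 0)
    = (∑' p : ℕ×ℕ, if 0 < p.1 ∧ 2*p.1 < p.2 then w p else 0)
    + (∑' p : ℕ×ℕ, if 0 < p.1 ∧ p.2 = 2*p.1 then w p else 0)
    + (∑' p : ℕ×ℕ, if 0 < p.1 ∧ p.1 < p.2 ∧ p.2 < 2*p.1 then w p else 0) := by
  rw [← ENNReal.tsum_add, ← ENNReal.tsum_add]
  apply tsum_congr; intro p
  split_ifs <;> simp_all <;> omega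

lemma T3_ne_top (k : ℕ) (hk : 3 ≤ k) :
    (∑' p : ℕ×ℕ, if 0 < p.1 ∧ p.1 < p.2 then
      ENNReal.ofReal (1/((p.1:ℝ)*(p.2:ℝ)^(k-1))) else 0) ≠ ⊤ := by
  have hb : ∀ p : ℕ×ℕ, (if 0 < p.1 ∧ p.1 < p.2 then
      ENNReal.ofReal (1/((p.1:ℝ)*(p.2:ℝ)^(k-1))) else 0)
      ≤ ENNReal.ofReal (1/(p.1:ℝ)^(3/2:ℝ)) * ENNReal.ofReal (1/(p.2:ℝ)^(3/2:ℝ)) := by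
    intro p
    split_ifs with h
    · obtain ⟨h1, h2⟩ := h
      rw [← ENNReal.ofReal_mul (by positivity)]
      apply ENNReal.ofReal_le_ofReal
      have hrw : (1/(p.1:ℝ)^(3/2:ℝ)) * (1/(p.2:ℝ)^(3/2:ℝ))
          = 1/((p.1:ℝ)^(3/2:ℝ) * (p.2:ℝ)^(3/2:ℝ)) := by ring
      rw [hrw]
      have ha0 : (0:ℝ) < (p.1:ℝ) := by exact_mod_cast h1
      have hab : (p.1:ℝ) ≤ (p.2:ℝ) := by exact_mod_cast h2.le
      have hb0 : (0:ℝ) < (p.2:ℝ) := lt_of_lt_of_le ha0 hab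
      have hb1 : (1:ℝ) ≤ (p.2:ℝ) := by exact_mod_cast (by omega : 1 ≤ p.2)
      apply one_div_le_one_div_of_le (by positivity)
      have e1 : (p.1:ℝ)^(3/2:ℝ) = (p.1:ℝ) * (p.1:ℝ)^(1/2:ℝ) := by
        rw [show (3/2:ℝ) = 1 + 1/2 by norm_num, Real.rpow_add ha0, Real.rpow_one]
      have e2 : (p.2:ℝ)^(1/2:ℝ) * (p.2:ℝ)^(3/2:ℝ) = (p.2:ℝ)^2 := by
        rw [← Real.rpow_add hb0]
        norm_num
      have e3 : (p.1:ℝ)^(1/2:ℝ) ≤ (p.2:ℝ)^(1/2:ℝ) :=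
        Real.rpow_le_rpow ha0.le hab (by norm_num)
      have e4 : (0:ℝ) ≤ (p.2:ℝ)^(3/2:ℝ) := Real.rpow_nonneg hb0.le _
      have e5 : (p.2:ℝ)^2 ≤ (p.2:ℝ)^(k-1) := pow_le_pow_right₀ hb1 (by omega)
      calc (p.1:ℝ)^(3/2:ℝ) * (p.2:ℝ)^(3/2:ℝ)
          = (p.1:ℝ) * ((p.1:ℝ)^(1/2:ℝ) * (p.2:ℝ)^(3/2:ℝ)) := by rw [e1]; ring
        _ ≤ (p.1:ℝ) * ((p.2:ℝ)^(1/2:ℝ) * (p.2:ℝ)^(3/2:ℝ)) := by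
            apply mul_le_mul_of_nonneg_left _ ha0.le
            exact mul_le_mul_of_nonneg_right e3 e4
        _ = (p.1:ℝ) * (p.2:ℝ)^2 := by rw [e2]
        _ ≤ (p.1:ℝ) * (p.2:ℝ)^(k-1) := mul_le_mul_of_nonneg_left e5 ha0.le
    · exact zero_le
  apply ne_top_of_le_ne_top _ (ENNReal.tsum_le_tsum hb)
  rw [ENNReal.tsum_prod (f := fun a b : ℕ =>
    ENNReal.ofReal (1/(a:ℝ)^(3/2:ℝ)) * ENNReal.ofReal (1/(b:ℝ)^(3/2:ℝ)))]
  simp_rw [ENNReal.tsum_mul_left]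
  rw [ENNReal.tsum_mul_right]
  have hS : (∑' (n:ℕ), ENNReal.ofReal (1/(n:ℝ)^(3/2:ℝ))) ≠ ⊤ := by
    rw [← ENNReal.ofReal_tsum_of_nonneg (fun n => by positivity)
      (Real.summable_one_div_nat_rpow.mpr (by norm_num))]
    exact ENNReal.ofReal_ne_top
  exact ENNReal.mul_ne_top hS hS

lemma diag_eval (k : ℕ) (hk : 3 ≤ k) :
    (∑' m : ℕ, if 0 < m then ENNReal.ofReal (1/((m:ℝ)*((2*m:ℕ):ℝ)^(k-1))) else 0)
    = ENNReal.ofReal (1/2^(k-1))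
      * ∑' m : ℕ, (if 0 < m then ENNReal.ofReal (1/(m:ℝ)^k) else 0) := by
  rw [← ENNReal.tsum_mul_left]
  apply tsum_congr; intro m
  by_cases h : 0 < m
  · rw [if_pos h, if_pos h, ← ENNReal.ofReal_mul (by positivity)]
    congr 1
    have hm : (0:ℝ) < (m:ℝ) := by exact_mod_cast h
    have hx : ((2*m:ℕ):ℝ) = 2*(m:ℝ) := by push_cast; ring
    obtain ⟨t, rfl⟩ : ∃ t, k = t+1 := ⟨k-1, by omega⟩
    simp only [Nat.add_sub_cancel]
    rw [hx, mul_pow]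
    have hy : (m:ℝ) * ((2:ℝ)^t * (m:ℝ)^t) = 2^t * (m:ℝ)^(t+1) := by
      rw [pow_succ]; ring
    rw [hy, one_div, one_div, one_div, mul_inv]
  · simp [h]

end Aux

/-- Sum formula: for k ≥ 3, ζ(k) = 2^{k-1} ∑_{r+s=k, r≥1, s≥2} ζ̂(r,s). -/
theorem sum_formula_zetaHat (k : ℕ) (hk : 3 ≤ k) :
    zetaVal k = 2 ^ (k - 1) * ∑ r ∈ Finset.Icc 1 (k - 2), zetaHat r (k - r) := by
  classical
  set T1 : ENNReal := ∑' p : ℕ×ℕ, if 0 < p.1 ∧ p.1 < p.2 then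
    ENNReal.ofReal (1/((p.1:ℝ)*((p.1:ℝ)+(p.2:ℝ))^(k-1))) else 0 with hT1
  set T2 : ENNReal := ∑' p : ℕ×ℕ, if 0 < p.1 ∧ p.1 < p.2 then
    ENNReal.ofReal (1/((p.2:ℝ)*((p.1:ℝ)+(p.2:ℝ))^(k-1))) else 0 with hT2
  set T3 : ENNReal := ∑' p : ℕ×ℕ, if 0 < p.1 ∧ p.1 < p.2 then
    ENNReal.ofReal (1/((p.1:ℝ)*(p.2:ℝ)^(k-1))) else 0 with hT3
  set D : ENNReal := ∑' p : ℕ×ℕ, if 0 < p.1 ∧ p.2 = 2*p.1 then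
    ENNReal.ofReal (1/((p.1:ℝ)*(p.2:ℝ)^(k-1))) else 0 with hD
  -- Step A : termwise identity summed
  have stepA : (∑ r ∈ Finset.Icc 1 (k-2), zetaHatE r (k-r)) + T1 + T2 = T3 := by
    rw [hT1, hT2, hT3]
    simp only [zetaHatE]
    rw [← Summable.tsum_finsetSum (fun _ _ => ENNReal.summable), ← ENNReal.tsum_add, ← ENNReal.tsum_add]
    apply tsum_congr; intro p
    by_cases h : 0 < p.1 ∧ p.1 < p.2
    · simp only [if_pos h]
      rw [← ENNReal.ofReal_sum_of_nonneg (fun i _ => by positivity),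
          ← ENNReal.ofReal_add (Finset.sum_nonneg fun i _ => by positivity) (by positivity),
          ← ENNReal.ofReal_add (by positivity) (by positivity)]
      exact congrArg _ (termwiseReal k hk p.1 p.2 h.1 h.2)
    · simp [h]
  -- Step B : partition of T3
  have stepB : T3 = T1 + D + T2 := by
    rw [hT3, tsum_partition (fun p => ENNReal.ofReal (1/((p.1:ℝ)*(p.2:ℝ)^(k-1))))]
    congr 1
    congr 1
    · rw [← tsum_shift1 (fun m n => ENNReal.ofReal (1/((m:ℝ)*(n:ℝ)^(k-1)))), hT1]
      apply tsum_congr; intro q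
      apply if_congr Iff.rfl _ rfl
      have : ((q.1 + q.2 : ℕ):ℝ) = (q.1:ℝ)+(q.2:ℝ) := by push_cast; ring
      rw [this]
    · rw [← tsum_shift2 (fun m n => ENNReal.ofReal (1/((m:ℝ)*(n:ℝ)^(k-1)))), hT2]
      apply tsum_congr; intro q
      apply if_congr Iff.rfl _ rfl
      have : ((q.1 + q.2 : ℕ):ℝ) = (q.1:ℝ)+(q.2:ℝ) := by push_cast; ring
      rw [this]
  -- finiteness facts
  have hT3top : T3 ≠ ⊤ := T3_ne_top k hk
  have h12 : T1 + T2 ≠ ⊤ := by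
    apply ne_top_of_le_ne_top hT3top
    rw [stepB]
    exact add_le_add le_self_add le_rfl
  have hsum_eq_D : (∑ r ∈ Finset.Icc 1 (k-2), zetaHatE r (k-r)) = D := by
    apply WithTop.add_right_cancel h12
    calc (∑ r ∈ Finset.Icc 1 (k-2), zetaHatE r (k-r)) + (T1 + T2)
        = (∑ r ∈ Finset.Icc 1 (k-2), zetaHatE r (k-r)) + T1 + T2 := by rw [add_assoc]
      _ = T3 := stepA
      _ = D + (T1 + T2) := by rw [stepB]; ring
  have hDtop : D ≠ ⊤ := by
    apply ne_top_of_le_ne_top hT3top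
    rw [stepB]
    have : (0:ENNReal) + D + 0 ≤ T1 + D + T2 :=
      add_le_add (add_le_add (zero_le : (0:ENNReal) ≤ T1) le_rfl) (zero_le : (0:ENNReal) ≤ T2)
    simpa using this
  have hsumtop : (∑ r ∈ Finset.Icc 1 (k-2), zetaHatE r (k-r)) ≠ ⊤ := by
    rw [hsum_eq_D]; exact hDtop
  have hHtop : ∀ r ∈ Finset.Icc 1 (k-2), zetaHatE r (k-r) ≠ ⊤ := by
    intro r hr
    exact ne_top_of_le_ne_top hsumtop
      (Finset.single_le_sum (f := fun i => zetaHatE i (k - i)) (fun i _ => zero_le) hr)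
  -- diagonal evaluation
  have hDeval : D = ENNReal.ofReal (1/2^(k-1)) * zetaValE k := by
    rw [hD, ← tsum_diag (fun m n => ENNReal.ofReal (1/((m:ℝ)*(n:ℝ)^(k-1)))),
      diag_eval k hk, zetaValE]
  have hfin : zetaValE k = (2:ENNReal)^(k-1) * ∑ r ∈ Finset.Icc 1 (k-2), zetaHatE r (k-r) := by
    rw [hsum_eq_D, hDeval, ← mul_assoc]
    have h2 : (2:ENNReal)^(k-1) * ENNReal.ofReal (1/2^(k-1)) = 1 := by
      rw [show ((2:ENNReal)) = ENNReal.ofReal 2 from (ENNReal.ofReal_ofNat 2).symm,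
        ← ENNReal.ofReal_pow (by norm_num), ← ENNReal.ofReal_mul (by positivity),
        mul_one_div_cancel (by positivity), ENNReal.ofReal_one]
    rw [h2, one_mul]
  calc zetaVal k = (zetaValE k).toReal := zetaVal_eq_toReal k
    _ = ((2:ENNReal)^(k-1) * ∑ r ∈ Finset.Icc 1 (k-2), zetaHatE r (k-r)).toReal := by
        rw [hfin]
    _ = 2^(k-1) * ∑ r ∈ Finset.Icc 1 (k-2), zetaHat r (k-r) := by
        rw [ENNReal.toReal_mul, ENNReal.toReal_pow, ENNReal.toReal_sum hHtop]
        simp only [ENNReal.toReal_ofNat]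
        congr 1
        exact Finset.sum_congr rfl (fun r _ => (zetaHat_eq_toReal r (k-r)).symm)
end

section
/- For every integer k ≥ 3, the sum formula for double zeta values holds: ∑_{r+s=k, r≥1, s≥2} ζ(r,s) = ζ(k). -/
open Finset Filter Topology

namespace SFDZ

noncomputable def phi (m : ℕ) : ℝ := 1 / ((m : ℝ) + 1) ^ ((3:ℝ)/2)

lemma phi_nonneg (m : ℕ) : 0 ≤ phi m := by
  unfold phi; positivity

lemma phi_summable : Summable phi := by
  have h : Summable (fun n : ℕ => 1 / (n : ℝ) ^ ((3:ℝ)/2)) :=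
    Real.summable_one_div_nat_rpow.2 (by norm_num)
  have := (summable_nat_add_iff 1).2 h
  refine this.congr fun n => ?_
  unfold phi
  push_cast
  ring_nf

lemma Phi_summable : Summable (fun p : ℕ × ℕ => phi p.1 * phi p.2) :=
  phi_summable.mul_of_nonneg phi_summable phi_nonneg phi_nonneg

/-- Key rpow inequality: for `1 ≤ x ≤ y`, `x^{3/2} y^{3/2} ≤ x y²`. -/
lemma key2 {x y : ℝ} (hx : 1 ≤ x) (hxy : x ≤ y) :
    x ^ ((3:ℝ)/2) * y ^ ((3:ℝ)/2) ≤ x * y ^ 2 := by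
  have hx0 : (0:ℝ) < x := lt_of_lt_of_le one_pos hx
  have hy0 : (0:ℝ) < y := lt_of_lt_of_le hx0 hxy
  have e1 : x ^ ((3:ℝ)/2) = x * x ^ ((1:ℝ)/2) := by
    rw [show (3:ℝ)/2 = 1 + 1/2 by norm_num, Real.rpow_add hx0, Real.rpow_one]
  have e2 : (y:ℝ) ^ 2 = y ^ ((1:ℝ)/2) * y ^ ((3:ℝ)/2) := by
    rw [← Real.rpow_add hy0, ← Real.rpow_natCast y 2]
    norm_num
  rw [e1, e2]
  have h12 : x ^ ((1:ℝ)/2) ≤ y ^ ((1:ℝ)/2) :=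
    Real.rpow_le_rpow hx0.le hxy (by norm_num)
  have h32 : (0:ℝ) ≤ y ^ ((3:ℝ)/2) := Real.rpow_nonneg hy0.le _
  calc x * x ^ ((1:ℝ)/2) * y ^ ((3:ℝ)/2)
      ≤ x * y ^ ((1:ℝ)/2) * y ^ ((3:ℝ)/2) :=
        mul_le_mul_of_nonneg_right (mul_le_mul_of_nonneg_left h12 hx0.le) h32
    _ = x * (y ^ ((1:ℝ)/2) * y ^ ((3:ℝ)/2)) := by ring

lemma key (m j : ℕ) :
    ((m:ℝ)+1) ^ ((3:ℝ)/2) * ((j:ℝ)+1) ^ ((3:ℝ)/2) ≤ ((m:ℝ)+1) * ((m:ℝ)+(j:ℝ)+2) ^ 2 := by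
  have hj : (0:ℝ) ≤ (j:ℝ) := Nat.cast_nonneg j
  have hm : (0:ℝ) ≤ (m:ℝ) := Nat.cast_nonneg m
  have h1 : ((j:ℝ)+1) ^ ((3:ℝ)/2) ≤ ((m:ℝ)+(j:ℝ)+2) ^ ((3:ℝ)/2) :=
    Real.rpow_le_rpow (by linarith) (by linarith) (by norm_num)
  calc ((m:ℝ)+1) ^ ((3:ℝ)/2) * ((j:ℝ)+1) ^ ((3:ℝ)/2)
      ≤ ((m:ℝ)+1) ^ ((3:ℝ)/2) * ((m:ℝ)+(j:ℝ)+2) ^ ((3:ℝ)/2) :=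
        mul_le_mul_of_nonneg_left h1 (Real.rpow_nonneg (by linarith) _)
    _ ≤ ((m:ℝ)+1) * ((m:ℝ)+(j:ℝ)+2) ^ 2 := key2 (by linarith) (by linarith)

lemma phiphi (m j : ℕ) :
    1 / (((m:ℝ)+1) * ((m:ℝ)+(j:ℝ)+2) ^ 2) ≤ phi m * phi j := by
  unfold phi
  rw [div_mul_div_comm, one_mul]
  exact one_div_le_one_div_of_le (by positivity) (key m j)

noncomputable def g (t m j : ℕ) : ℝ :=
  ∑ r ∈ Icc 1 t, 1 / (((m:ℝ)+1) ^ r * ((m:ℝ)+(j:ℝ)+2) ^ (t+2-r))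

lemma g_nonneg (t m j : ℕ) : 0 ≤ g t m j := by
  unfold g
  apply Finset.sum_nonneg
  intro r _
  positivity

lemma g_term_le (t m j r : ℕ) (hr : r ∈ Icc 1 t) :
    1 / (((m:ℝ)+1) ^ r * ((m:ℝ)+(j:ℝ)+2) ^ (t+2-r)) ≤ phi m * phi j := by
  rw [Finset.mem_Icc] at hr
  refine le_trans ?_ (phiphi m j)
  apply one_div_le_one_div_of_le (by positivity)
  have hm : (1:ℝ) ≤ (m:ℝ)+1 := by
    have := Nat.cast_nonneg (α := ℝ) m; linarith
  have hn : (1:ℝ) ≤ (m:ℝ)+(j:ℝ)+2 := by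
    have := Nat.cast_nonneg (α := ℝ) m; have := Nat.cast_nonneg (α := ℝ) j; linarith
  have h1 : ((m:ℝ)+1) ^ 1 ≤ ((m:ℝ)+1) ^ r := pow_le_pow_right₀ hm hr.1
  have h2 : ((m:ℝ)+(j:ℝ)+2) ^ 2 ≤ ((m:ℝ)+(j:ℝ)+2) ^ (t+2-r) :=
    pow_le_pow_right₀ hn (by omega)
  calc ((m:ℝ)+1) * ((m:ℝ)+(j:ℝ)+2) ^ 2
      = ((m:ℝ)+1) ^ 1 * ((m:ℝ)+(j:ℝ)+2) ^ 2 := by ring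
    _ ≤ ((m:ℝ)+1) ^ r * ((m:ℝ)+(j:ℝ)+2) ^ (t+2-r) := by
        apply mul_le_mul h1 h2 (by positivity) (by positivity)

lemma g_le (t m j : ℕ) : g t m j ≤ (t:ℝ) * (phi m * phi j) := by
  calc g t m j ≤ ∑ _r ∈ Icc 1 t, phi m * phi j :=
        Finset.sum_le_sum fun r hr => g_term_le t m j r hr
    _ = (t:ℝ) * (phi m * phi j) := by
        rw [Finset.sum_const, Nat.card_Icc]
        simp [nsmul_eq_mul]

lemma g_summable (t : ℕ) : Summable (fun p : ℕ × ℕ => g t p.1 p.2) :=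
  Summable.of_nonneg_of_le (fun p => g_nonneg t p.1 p.2)
    (fun p => g_le t p.1 p.2) (Phi_summable.mul_left _)

lemma g_closed (t m j : ℕ) :
    g t m j = 1 / (((m:ℝ)+1) ^ (t+1) * ((j:ℝ)+1))
      - 1 / (((m:ℝ)+1) ^ (t+1) * ((m:ℝ)+(j:ℝ)+2))
      - 1 / (((j:ℝ)+1) * ((m:ℝ)+(j:ℝ)+2) ^ (t+1)) := by
  have hm : ((m:ℝ)+1) ≠ 0 := by positivity
  have hj : ((j:ℝ)+1) ≠ 0 := by positivity
  have hn : ((m:ℝ)+(j:ℝ)+2) ≠ 0 := by positivity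
  induction t with
  | zero =>
    simp only [g]
    rw [show Finset.Icc 1 0 = ∅ from rfl, Finset.sum_empty]
    field_simp
    ring
  | succ t ih =>
    have step : g (t+1) m j
        = (g t m j + 1 / (((m:ℝ)+1) ^ (t+1) * ((m:ℝ)+(j:ℝ)+2)))
          / ((m:ℝ)+(j:ℝ)+2) := by
      unfold g
      rw [Finset.sum_Icc_succ_top (by omega : 1 ≤ t+1), add_div, Finset.sum_div]
      congr 1
      · apply Finset.sum_congr rfl
        intro r hr
        rw [Finset.mem_Icc] at hr
        have h : t+1+2-r = (t+2-r)+1 := by omega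
        rw [h, pow_succ]
        field_simp
      · have h : t+1+2-(t+1) = 2 := by omega
        rw [h]
        field_simp
    rw [step, ih]
    field_simp
    ring

lemma summable_one_div_sq_shift : Summable (fun j : ℕ => 1 / ((j:ℝ)+1) ^ 2) := by
  have h : Summable (fun n : ℕ => 1 / (n : ℝ) ^ 2) := by
    have := Real.summable_one_div_nat_pow (p := 2)
    exact this.2 (by norm_num)
  have := (summable_nat_add_iff 1).2 h
  refine this.congr fun n => ?_
  push_cast
  ring_nf

lemma hasSum_harmonic (M : ℕ) :
    HasSum (fun j : ℕ => 1/((j:ℝ)+1) - 1/((j:ℝ)+(M:ℝ)+1))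
      (∑ i ∈ range M, 1/((i:ℝ)+1)) := by
  have hnn : ∀ j : ℕ, 0 ≤ 1/((j:ℝ)+1) - 1/((j:ℝ)+(M:ℝ)+1) := by
    intro j
    have hM : (0:ℝ) ≤ (M:ℝ) := Nat.cast_nonneg M
    have hj : (0:ℝ) ≤ (j:ℝ) := Nat.cast_nonneg j
    have := one_div_le_one_div_of_le (by linarith : (0:ℝ) < (j:ℝ)+1) (by linarith : (j:ℝ)+1 ≤ (j:ℝ)+(M:ℝ)+1)
    linarith
  rw [hasSum_iff_tendsto_nat_of_nonneg hnn]
  have key : ∀ n : ℕ, ∑ j ∈ range n, (1/((j:ℝ)+1) - 1/((j:ℝ)+(M:ℝ)+1))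
      = ∑ i ∈ range M, 1/((i:ℝ)+1) - ∑ j ∈ range M, 1/((j:ℝ)+(n:ℝ)+1) := by
    intro n
    induction n with
    | zero => simp
    | succ n ih =>
      rw [Finset.sum_range_succ, ih]
      have tele : ∑ j ∈ range M, (1/((j:ℝ)+(n:ℝ)+1) - 1/((j:ℝ)+(n:ℝ)+2))
          = 1/((n:ℝ)+1) - 1/((M:ℝ)+(n:ℝ)+1) := by
        have h := Finset.sum_range_sub' (f := fun j : ℕ => 1/((j:ℝ)+(n:ℝ)+1)) (n := M)
        have hg : ∑ j ∈ range M, (1/((j:ℝ)+(n:ℝ)+1) - 1/((j:ℝ)+(n:ℝ)+2))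
            = ∑ j ∈ range M, ((fun j : ℕ => 1/((j:ℝ)+(n:ℝ)+1)) j
              - (fun j : ℕ => 1/((j:ℝ)+(n:ℝ)+1)) (j+1)) := by
          apply Finset.sum_congr rfl
          intro j _
          push_cast
          ring_nf
        rw [hg, h]
        norm_num
      have e2 : ∑ j ∈ range M, 1/((j:ℝ)+(n:ℝ)+1) - ∑ j ∈ range M, 1/((j:ℝ)+((n:ℕ):ℝ)+2)
          = 1/((n:ℝ)+1) - 1/((M:ℝ)+(n:ℝ)+1) := by
        rw [← Finset.sum_sub_distrib]
        exact tele
      have e3 : ∑ j ∈ range M, 1/((j:ℝ)+(((n+1):ℕ):ℝ)+1) = ∑ j ∈ range M, 1/((j:ℝ)+(n:ℝ)+2) := by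
        apply Finset.sum_congr rfl
        intro j _
        push_cast
        ring_nf
      rw [e3]
      push_cast
      have hc : 1/((n:ℝ)+(M:ℝ)+1) = 1/((M:ℝ)+(n:ℝ)+1) := by ring_nf
      linarith [e2, hc]
  simp only [key]
  have hz : Tendsto (fun n : ℕ => ∑ j ∈ range M, 1/((j:ℝ)+(n:ℝ)+1)) atTop (𝓝 0) := by
    have : Tendsto (fun n : ℕ => ∑ j ∈ range M, 1/((j:ℝ)+(n:ℝ)+1)) atTop
        (𝓝 (∑ j ∈ range M, (0:ℝ))) := by
      apply tendsto_finset_sum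
      intro j _
      have h1 : Tendsto (fun n : ℕ => (j:ℝ)+(n:ℝ)+1) atTop atTop := by
        apply tendsto_atTop_add_const_right
        apply tendsto_atTop_add_const_left
        exact tendsto_natCast_atTop_atTop
      have h2 := h1.inv_tendsto_atTop
      exact h2.congr (fun n => by simp [one_div])
    simpa using this
  have := (tendsto_const_nhds (x := ∑ i ∈ range M, 1/((i:ℝ)+1)) (f := atTop (α := ℕ))).sub hz
  simpa using this

noncomputable def A (m : ℕ) : ℝ := ∑ i ∈ range (m+1), 1/((i:ℝ)+1)

lemma A_nonneg (m : ℕ) : 0 ≤ A m := by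
  apply Finset.sum_nonneg; intro i _; positivity

noncomputable def c (t m : ℕ) : ℝ :=
  ∑' j : ℕ, 1/(((j:ℝ)+1) * ((m:ℝ)+(j:ℝ)+2) ^ (t+1))

lemma c_summable_j (t m : ℕ) :
    Summable (fun j : ℕ => 1/(((j:ℝ)+1) * ((m:ℝ)+(j:ℝ)+2) ^ (t+1))) := by
  apply Summable.of_nonneg_of_le (fun j => by positivity) _ summable_one_div_sq_shift
  intro j
  apply one_div_le_one_div_of_le (by positivity)
  have hm : (0:ℝ) ≤ (m:ℝ) := Nat.cast_nonneg m
  have hj : (0:ℝ) ≤ (j:ℝ) := Nat.cast_nonneg j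
  have h1 : ((j:ℝ)+1) ≤ ((m:ℝ)+(j:ℝ)+2)^(t+1) := by
    calc ((j:ℝ)+1) ≤ ((m:ℝ)+(j:ℝ)+2)^1 := by simp; linarith
      _ ≤ ((m:ℝ)+(j:ℝ)+2)^(t+1) := pow_le_pow_right₀ (by linarith) (by omega)
  calc ((j:ℝ)+1)^2 = ((j:ℝ)+1)*((j:ℝ)+1) := sq ((j:ℝ)+1)
    _ ≤ ((j:ℝ)+1) * ((m:ℝ)+(j:ℝ)+2)^(t+1) := by
        apply mul_le_mul_of_nonneg_left h1 (by linarith)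

lemma c_nonneg (t m : ℕ) : 0 ≤ c t m :=
  tsum_nonneg fun j => by positivity

lemma hasSum_row (t m : ℕ) :
    HasSum (fun j : ℕ => g t m j) (A m / ((m:ℝ)+1)^(t+1) - c t m) := by
  have h1 := (hasSum_harmonic (m+1)).div_const (((m:ℝ)+1)^(t+1))
  have h2 := (c_summable_j t m).hasSum
  have h3 := h1.sub h2
  have e : (fun j : ℕ => (1/((j:ℝ)+1) - 1/((j:ℝ)+((m+1:ℕ):ℝ)+1)) / (((m:ℝ)+1)^(t+1))
      - 1/(((j:ℝ)+1) * ((m:ℝ)+(j:ℝ)+2) ^ (t+1))) = fun j : ℕ => g t m j := by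
    funext j
    rw [g_closed]
    have hm : ((m:ℝ)+1) ≠ 0 := by positivity
    have hj : ((j:ℝ)+1) ≠ 0 := by positivity
    have hn : ((m:ℝ)+(j:ℝ)+2) ≠ 0 := by positivity
    push_cast
    field_simp
    ring
  rw [e] at h3
  exact h3

lemma F_le (M : ℕ) : ∑ i ∈ range M, 1/((i:ℝ)+1) ≤ 2 * Real.sqrt M := by
  induction M with
  | zero => simp
  | succ M ih =>
    rw [Finset.sum_range_succ]
    have s0 := Real.sqrt_nonneg (M:ℝ)
    have s1 := Real.sqrt_nonneg ((M:ℝ)+1)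
    have hsq : Real.sqrt ((M:ℝ)+1) ^ 2 = (M:ℝ)+1 := Real.sq_sqrt (by positivity)
    have hsq2 : Real.sqrt (M:ℝ) ^ 2 = (M:ℝ) := Real.sq_sqrt (Nat.cast_nonneg M)
    have hle : Real.sqrt (M:ℝ) ≤ Real.sqrt ((M:ℝ)+1) := Real.sqrt_le_sqrt (by linarith)
    have h1 : (1:ℝ) ≤ Real.sqrt ((M:ℝ)+1) := by nlinarith
    have hd : (Real.sqrt ((M:ℝ)+1) - Real.sqrt (M:ℝ))
        * (Real.sqrt ((M:ℝ)+1) + Real.sqrt (M:ℝ)) = 1 := by nlinarith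
    have key : 1/((M:ℝ)+1) ≤ 2*(Real.sqrt ((M:ℝ)+1) - Real.sqrt (M:ℝ)) := by
      rw [div_le_iff₀ (by positivity)]
      nlinarith
    push_cast
    linarith

lemma sqrt_div_rpow {x : ℝ} (hx : 0 < x) : Real.sqrt x / x^2 = 1 / x^((3:ℝ)/2) := by
  have h : Real.sqrt x * x^((3:ℝ)/2) = x^2 := by
    rw [Real.sqrt_eq_rpow, ← Real.rpow_add hx, ← Real.rpow_natCast x 2]
    norm_num
  rw [div_eq_div_iff (by positivity) (by positivity : x^((3:ℝ)/2) ≠ 0)]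
  linarith

lemma rowA_le {t : ℕ} (ht : 1 ≤ t) (m : ℕ) :
    A m / ((m:ℝ)+1)^(t+1) ≤ 2 * phi m := by
  have hx : (0:ℝ) < (m:ℝ)+1 := by positivity
  have h1 : A m / ((m:ℝ)+1)^(t+1) ≤ A m / ((m:ℝ)+1)^2 := by
    apply div_le_div_of_nonneg_left (A_nonneg m) (by positivity)
    exact pow_le_pow_right₀ (by linarith) (by omega)
  have h2 : A m / ((m:ℝ)+1)^2 ≤ 2 * Real.sqrt ((m:ℝ)+1) / ((m:ℝ)+1)^2 := by
    apply div_le_div_of_nonneg_right ?_ (by positivity)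
    have := F_le (m+1)
    unfold A
    push_cast at this ⊢
    exact this
  have h3 : 2 * Real.sqrt ((m:ℝ)+1) / ((m:ℝ)+1)^2 = 2 * phi m := by
    unfold phi
    rw [mul_div_assoc, sqrt_div_rpow hx]
  calc A m / ((m:ℝ)+1)^(t+1) ≤ A m / ((m:ℝ)+1)^2 := h1
    _ ≤ 2 * Real.sqrt ((m:ℝ)+1) / ((m:ℝ)+1)^2 := h2
    _ = 2 * phi m := h3

lemma summable_rowA {t : ℕ} (ht : 1 ≤ t) :
    Summable (fun m : ℕ => A m / ((m:ℝ)+1)^(t+1)) := by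
  apply Summable.of_nonneg_of_le (fun m => by
    have := A_nonneg m; positivity) (rowA_le ht) (phi_summable.mul_left 2)

lemma c_le {t : ℕ} (ht : 1 ≤ t) (m : ℕ) :
    c t m ≤ (∑' j : ℕ, phi j) * phi m := by
  have hb : ∀ j : ℕ, 1/(((j:ℝ)+1) * ((m:ℝ)+(j:ℝ)+2) ^ (t+1)) ≤ phi j * phi m := by
    intro j
    have hm : (0:ℝ) ≤ (m:ℝ) := Nat.cast_nonneg m
    have hj : (0:ℝ) ≤ (j:ℝ) := Nat.cast_nonneg j
    have h0 : 1/(((j:ℝ)+1) * ((m:ℝ)+(j:ℝ)+2) ^ (t+1))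
        ≤ 1/(((j:ℝ)+1) * ((m:ℝ)+(j:ℝ)+2) ^ 2) := by
      apply one_div_le_one_div_of_le (by positivity)
      apply mul_le_mul_of_nonneg_left _ (by linarith)
      exact pow_le_pow_right₀ (by linarith) (by omega)
    refine h0.trans ?_
    have := phiphi j m
    rw [show (j:ℝ)+(m:ℝ)+2 = (m:ℝ)+(j:ℝ)+2 by ring] at this
    exact this
  calc c t m ≤ ∑' j : ℕ, phi j * phi m := by
        apply Summable.tsum_le_tsum hb (c_summable_j t m) (phi_summable.mul_right (phi m))
    _ = (∑' j : ℕ, phi j) * phi m := tsum_mul_right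

lemma summable_c {t : ℕ} (ht : 1 ≤ t) : Summable (c t) :=
  Summable.of_nonneg_of_le (c_nonneg t) (c_le ht)
    (phi_summable.mul_left _)

noncomputable def phiN (n : ℕ) : ℝ := 1 / (n:ℝ) ^ ((3:ℝ)/2)

lemma phiN_summable : Summable phiN :=
  Real.summable_one_div_nat_rpow.2 (by norm_num)

lemma phiN_nonneg (n : ℕ) : 0 ≤ phiN n := by unfold phiN; positivity

lemma PhiN_summable : Summable (fun p : ℕ × ℕ => phiN p.1 * phiN p.2) :=
  phiN_summable.mul_of_nonneg phiN_summable phiN_nonneg phiN_nonneg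

lemma dz_term_le {r s : ℕ} (hr : 1 ≤ r) (hs : 2 ≤ s) (p : ℕ × ℕ) :
    (if 0 < p.1 ∧ p.1 < p.2 then 1 / ((p.1:ℝ)^r * (p.2:ℝ)^s) else 0)
      ≤ phiN p.1 * phiN p.2 := by
  split_ifs with h
  · obtain ⟨h1, h2⟩ := h
    have hm : (1:ℝ) ≤ (p.1:ℝ) := by exact_mod_cast h1
    have hn : (p.1:ℝ) ≤ (p.2:ℝ) := by exact_mod_cast h2.le
    have h1n : (1:ℝ) ≤ (p.2:ℝ) := hm.trans hn
    unfold phiN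
    rw [div_mul_div_comm, one_mul]
    apply one_div_le_one_div_of_le (by positivity)
    calc (p.1:ℝ) ^ ((3:ℝ)/2) * (p.2:ℝ) ^ ((3:ℝ)/2) ≤ (p.1:ℝ) * (p.2:ℝ)^2 :=
          key2 hm hn
      _ ≤ (p.1:ℝ)^r * (p.2:ℝ)^s := by
          apply mul_le_mul
          · calc (p.1:ℝ) = (p.1:ℝ)^1 := (pow_one _).symm
              _ ≤ (p.1:ℝ)^r := pow_le_pow_right₀ hm hr
          · exact pow_le_pow_right₀ h1n hs
          · positivity
          · positivity
  · exact mul_nonneg (phiN_nonneg _) (phiN_nonneg _)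

lemma dz_summable {r s : ℕ} (hr : 1 ≤ r) (hs : 2 ≤ s) :
    Summable (fun p : ℕ × ℕ =>
      if 0 < p.1 ∧ p.1 < p.2 then 1 / ((p.1:ℝ)^r * (p.2:ℝ)^s) else 0) := by
  apply Summable.of_nonneg_of_le _ (dz_term_le hr hs) PhiN_summable
  intro p
  split_ifs with h
  · positivity
  · exact le_refl 0

noncomputable def hfun (t : ℕ) (q : ℕ × ℕ) : ℝ :=
  if q.2 ≤ q.1 then 1/(((q.2:ℝ)+1) * ((q.1:ℝ)+2)^(t+1)) else 0

lemma hfun_nonneg (t : ℕ) (q : ℕ × ℕ) : 0 ≤ hfun t q := by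
  unfold hfun; split_ifs
  · positivity
  · exact le_refl 0

lemma hfun_le {t : ℕ} (ht : 1 ≤ t) (q : ℕ × ℕ) : hfun t q ≤ phi q.1 * phi q.2 := by
  unfold hfun
  split_ifs with h
  · unfold phi
    rw [div_mul_div_comm, one_mul]
    apply one_div_le_one_div_of_le (by positivity)
    have h1 : (0:ℝ) ≤ (q.1:ℝ) := Nat.cast_nonneg _
    have h2 : (0:ℝ) ≤ (q.2:ℝ) := Nat.cast_nonneg _
    have h2le : ((q.2:ℝ)+1) ≤ ((q.1:ℝ)+2) := by
      have : (q.2:ℝ) ≤ (q.1:ℝ) := by exact_mod_cast h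
      linarith
    have k2 := key2 (x := (q.2:ℝ)+1) (y := (q.1:ℝ)+2) (by linarith) h2le
    have m1 : ((q.1:ℝ)+1) ^ ((3:ℝ)/2) ≤ ((q.1:ℝ)+2) ^ ((3:ℝ)/2) :=
      Real.rpow_le_rpow (by linarith) (by linarith) (by norm_num)
    have m2 : ((q.1:ℝ)+2)^2 ≤ ((q.1:ℝ)+2)^(t+1) :=
      pow_le_pow_right₀ (by linarith) (by omega)
    calc ((q.1:ℝ)+1) ^ ((3:ℝ)/2) * ((q.2:ℝ)+1) ^ ((3:ℝ)/2)
        ≤ ((q.1:ℝ)+2) ^ ((3:ℝ)/2) * ((q.2:ℝ)+1) ^ ((3:ℝ)/2) :=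
          mul_le_mul_of_nonneg_right m1 (Real.rpow_nonneg (by linarith) _)
      _ = ((q.2:ℝ)+1) ^ ((3:ℝ)/2) * ((q.1:ℝ)+2) ^ ((3:ℝ)/2) := by ring
      _ ≤ ((q.2:ℝ)+1) * ((q.1:ℝ)+2)^2 := k2
      _ ≤ ((q.2:ℝ)+1) * ((q.1:ℝ)+2)^(t+1) := by
          apply mul_le_mul_of_nonneg_left m2 (by linarith)
  · exact mul_nonneg (phi_nonneg _) (phi_nonneg _)

lemma hfun_summable {t : ℕ} (ht : 1 ≤ t) : Summable (hfun t) :=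
  Summable.of_nonneg_of_le (hfun_nonneg t) (hfun_le ht) Phi_summable

lemma F2_le {t : ℕ} (ht : 1 ≤ t) (p : ℕ × ℕ) :
    1/(((p.2:ℝ)+1) * ((p.1:ℝ)+(p.2:ℝ)+2)^(t+1)) ≤ phi p.1 * phi p.2 := by
  have h1 : (0:ℝ) ≤ (p.1:ℝ) := Nat.cast_nonneg _
  have h2 : (0:ℝ) ≤ (p.2:ℝ) := Nat.cast_nonneg _
  have h0 : 1/(((p.2:ℝ)+1) * ((p.1:ℝ)+(p.2:ℝ)+2)^(t+1))
      ≤ 1/(((p.2:ℝ)+1) * ((p.1:ℝ)+(p.2:ℝ)+2)^2) := by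
    apply one_div_le_one_div_of_le (by positivity)
    apply mul_le_mul_of_nonneg_left _ (by linarith)
    exact pow_le_pow_right₀ (by linarith) (by omega)
  refine h0.trans ?_
  have hp := phiphi p.2 p.1
  rw [show (p.2:ℝ)+(p.1:ℝ)+2 = (p.1:ℝ)+(p.2:ℝ)+2 by ring] at hp
  calc 1/(((p.2:ℝ)+1) * ((p.1:ℝ)+(p.2:ℝ)+2)^2) ≤ phi p.2 * phi p.1 := hp
    _ = phi p.1 * phi p.2 := by ring

lemma F2_summable {t : ℕ} (ht : 1 ≤ t) :
    Summable (fun p : ℕ × ℕ => 1/(((p.2:ℝ)+1) * ((p.1:ℝ)+(p.2:ℝ)+2)^(t+1))) :=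
  Summable.of_nonneg_of_le (fun p => by positivity) (F2_le ht) Phi_summable

lemma c_reindex {t : ℕ} (ht : 1 ≤ t) :
    ∑' m : ℕ, c t m = ∑' q : ℕ, A q / ((q:ℝ)+2)^(t+1) := by
  have step1 : ∑' m : ℕ, c t m
      = ∑' p : ℕ × ℕ, 1/(((p.2:ℝ)+1) * ((p.1:ℝ)+(p.2:ℝ)+2)^(t+1)) := by
    rw [Summable.tsum_prod' (F2_summable ht) (fun m => c_summable_j t m)]
    rfl
  have hinj : Function.Injective (fun p : ℕ × ℕ => ((p.1 + p.2, p.2) : ℕ × ℕ)) := by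
    intro a b hab
    simp only [Prod.ext_iff] at hab ⊢
    omega
  have hsupp : Function.support (hfun t)
      ⊆ Set.range (fun p : ℕ × ℕ => ((p.1 + p.2, p.2) : ℕ × ℕ)) := by
    intro q hq
    by_cases h : q.2 ≤ q.1
    · refine ⟨(q.1 - q.2, q.2), ?_⟩
      have he : q.1 - q.2 + q.2 = q.1 := by omega
      simp [Prod.ext_iff, he]
    · exfalso
      apply hq
      unfold hfun
      rw [if_neg h]
  have step2 := hinj.tsum_eq (f := hfun t) hsupp
  have step3 : ∀ p : ℕ × ℕ, hfun t (p.1+p.2, p.2)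
      = 1/(((p.2:ℝ)+1) * ((p.1:ℝ)+(p.2:ℝ)+2)^(t+1)) := by
    intro p
    unfold hfun
    rw [if_pos (by omega : p.2 ≤ p.1 + p.2)]
    push_cast
    ring_nf
  have inner_summable : ∀ n : ℕ, Summable (fun j : ℕ => hfun t (n, j)) := by
    intro n
    apply summable_of_ne_finset_zero (s := Finset.range (n+1))
    intro j hj
    unfold hfun
    rw [if_neg]
    simp only [Finset.mem_range] at hj
    omega
  have step4 : ∑' q : ℕ × ℕ, hfun t q = ∑' n : ℕ, A n / ((n:ℝ)+2)^(t+1) := by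
    rw [Summable.tsum_prod' (hfun_summable ht) inner_summable]
    apply tsum_congr
    intro n
    rw [tsum_eq_sum (s := Finset.range (n+1)) (fun j hj => by
      unfold hfun
      rw [if_neg]
      simp only [Finset.mem_range] at hj
      omega)]
    unfold A
    rw [Finset.sum_div]
    apply Finset.sum_congr rfl
    intro j hj
    simp only [Finset.mem_range] at hj
    unfold hfun
    rw [if_pos (by omega : j ≤ n), div_div]
  rw [step1, ← step4, ← step2]
  exact tsum_congr fun p => (step3 p).symm

lemma summable_zeta (k : ℕ) (hk : 2 ≤ k) :
    Summable (fun q : ℕ => 1/((q:ℝ)+1)^k) := by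
  apply Summable.of_nonneg_of_le (fun q => by positivity) _ summable_one_div_sq_shift
  intro q
  apply one_div_le_one_div_of_le (by positivity)
  have hq : (0:ℝ) ≤ (q:ℝ) := Nat.cast_nonneg q
  exact pow_le_pow_right₀ (by linarith) hk

end SFDZ

lemma zetaVal_eq (k : ℕ) : zetaVal k = ∑' q : ℕ, 1/((q:ℝ)+1)^k := by
  unfold zetaVal
  have hinj : Function.Injective (fun q : ℕ => q + 1) := add_left_injective 1
  have hsupp : Function.support (fun n : ℕ => if 0 < n then 1/(n:ℝ)^k else 0)
      ⊆ Set.range (fun q : ℕ => q + 1) := by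
    intro n hn
    by_cases h : 0 < n
    · exact ⟨n - 1, Nat.succ_pred_eq_of_pos h⟩
    · exact absurd (if_neg h) hn
  rw [← hinj.tsum_eq hsupp]
  apply tsum_congr
  intro q
  rw [if_pos (by omega : 0 < q + 1)]
  push_cast
  ring_nf


/-- Sum formula for double zeta values: ∑_{r+s=k, r≥1, s≥2} ζ(r,s) = ζ(k). -/
theorem sum_formula_doubleZeta (k : ℕ) (hk : 3 ≤ k) :
    ∑ r ∈ Finset.Icc 1 (k - 2), doubleZeta r (k - r) = zetaVal k := by
  obtain ⟨t, rfl⟩ : ∃ t, k = t + 2 := ⟨k - 2, by omega⟩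
  have ht : 1 ≤ t := by omega
  have h2 : t + 2 - 2 = t := by omega
  rw [h2]
  have hsum_r : ∀ r ∈ Finset.Icc 1 t, Summable (fun p : ℕ × ℕ =>
      if 0 < p.1 ∧ p.1 < p.2 then 1 / ((p.1:ℝ)^r * (p.2:ℝ)^(t+2-r)) else 0) := by
    intro r hr
    rw [Finset.mem_Icc] at hr
    exact SFDZ.dz_summable hr.1 (by omega)
  have step1 : ∑ r ∈ Finset.Icc 1 t, doubleZeta r (t + 2 - r)
      = ∑' p : ℕ × ℕ, (if 0 < p.1 ∧ p.1 < p.2 then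
          (∑ r ∈ Finset.Icc 1 t, 1 / ((p.1:ℝ)^r * (p.2:ℝ)^(t+2-r))) else 0) := by
    unfold doubleZeta
    rw [← Summable.tsum_finsetSum hsum_r]
    apply tsum_congr
    intro p
    by_cases h : 0 < p.1 ∧ p.1 < p.2
    · simp [h]
    · simp [h]
  have hinj : Function.Injective (fun q : ℕ × ℕ => ((q.1+1, q.1+q.2+2) : ℕ × ℕ)) := by
    intro a b hab
    simp only [Prod.ext_iff] at hab ⊢
    omega
  have hsupp : Function.support (fun p : ℕ × ℕ => if 0 < p.1 ∧ p.1 < p.2 then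
      (∑ r ∈ Finset.Icc 1 t, 1 / ((p.1:ℝ)^r * (p.2:ℝ)^(t+2-r))) else 0)
      ⊆ Set.range (fun q : ℕ × ℕ => ((q.1+1, q.1+q.2+2) : ℕ × ℕ)) := by
    intro p hp
    by_cases h : 0 < p.1 ∧ p.1 < p.2
    · obtain ⟨ha, hb⟩ := h
      refine ⟨(p.1 - 1, p.2 - p.1 - 1), ?_⟩
      have e1 : p.1 - 1 + 1 = p.1 := by omega
      have e2 : p.1 - 1 + (p.2 - p.1 - 1) + 2 = p.2 := by omega
      simp [Prod.ext_iff, e1, e2]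
    · exact absurd (if_neg h) hp
  have step2 : (∑' p : ℕ × ℕ, (if 0 < p.1 ∧ p.1 < p.2 then
      (∑ r ∈ Finset.Icc 1 t, 1 / ((p.1:ℝ)^r * (p.2:ℝ)^(t+2-r))) else 0))
      = ∑' q : ℕ × ℕ, SFDZ.g t q.1 q.2 := by
    rw [← hinj.tsum_eq hsupp]
    apply tsum_congr
    intro q
    rw [if_pos (⟨by omega, by omega⟩ : 0 < q.1+1 ∧ q.1+1 < q.1+q.2+2)]
    unfold SFDZ.g
    apply Finset.sum_congr rfl
    intro r hr
    push_cast
    ring_nf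
  have step3 : ∑' q : ℕ × ℕ, SFDZ.g t q.1 q.2
      = ∑' m : ℕ, (SFDZ.A m / ((m:ℝ)+1)^(t+1) - SFDZ.c t m) := by
    rw [Summable.tsum_prod' (SFDZ.g_summable t) (fun m => (SFDZ.hasSum_row t m).summable)]
    exact tsum_congr fun m => (SFDZ.hasSum_row t m).tsum_eq
  have step4 : ∑' m : ℕ, (SFDZ.A m / ((m:ℝ)+1)^(t+1) - SFDZ.c t m)
      = (∑' m : ℕ, SFDZ.A m / ((m:ℝ)+1)^(t+1)) - ∑' m : ℕ, SFDZ.c t m :=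
    Summable.tsum_sub (SFDZ.summable_rowA ht) (SFDZ.summable_c ht)
  have hs1 : Summable (fun q : ℕ => SFDZ.A (q+1) / ((q:ℝ)+2)^(t+1)) := by
    have h := (summable_nat_add_iff 1).2 (SFDZ.summable_rowA ht)
    refine h.congr fun q => ?_
    push_cast
    ring_nf
  have hs2 : Summable (fun q : ℕ => SFDZ.A q / ((q:ℝ)+2)^(t+1)) := by
    apply Summable.of_nonneg_of_le _ _ (SFDZ.summable_rowA ht)
    · intro q
      have := SFDZ.A_nonneg q
      positivity
    · intro q
      apply div_le_div_of_nonneg_left (SFDZ.A_nonneg q) (by positivity)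
      apply pow_le_pow_left₀ (by positivity)
      have hq : (0:ℝ) ≤ (q:ℝ) := Nat.cast_nonneg q
      linarith
  have step5 : ∑' m : ℕ, SFDZ.A m / ((m:ℝ)+1)^(t+1)
      = 1 + ∑' q : ℕ, SFDZ.A (q+1) / ((q:ℝ)+2)^(t+1) := by
    rw [Summable.tsum_eq_zero_add (SFDZ.summable_rowA ht)]
    congr 1
    · simp [SFDZ.A]
    · apply tsum_congr
      intro q
      push_cast
      ring_nf
  have step6 : (∑' q : ℕ, SFDZ.A (q+1) / ((q:ℝ)+2)^(t+1)) - (∑' m : ℕ, SFDZ.c t m)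
      = ∑' q : ℕ, 1/((q:ℝ)+2)^(t+2) := by
    rw [SFDZ.c_reindex ht, ← Summable.tsum_sub hs1 hs2]
    apply tsum_congr
    intro q
    rw [div_sub_div_same]
    have hA : SFDZ.A (q+1) - SFDZ.A q = 1/((q:ℝ)+2) := by
      unfold SFDZ.A
      rw [Finset.sum_range_succ]
      push_cast
      ring
    rw [hA, div_div, ← pow_succ']
  have hzsum : Summable (fun q : ℕ => 1/((q:ℝ)+1)^(t+2)) :=
    SFDZ.summable_zeta (t+2) (by omega)
  have step7 : zetaVal (t+2) = 1 + ∑' q : ℕ, 1/((q:ℝ)+2)^(t+2) := by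
    rw [zetaVal_eq]
    rw [Summable.tsum_eq_zero_add hzsum]
    congr 1
    · norm_num
    · apply tsum_congr
      intro q
      push_cast
      ring_nf
  rw [step1, step2, step3, step4, step5, step7]
  linarith [step6]
end

section
/- Let k ≥ 2 be an integer. For the q-series ζ_q(k) = (1/(k−1)!) ∑_{n>0} σ_{k−1}(n) q^n (real q with 0 < q < 1), one has lim_{q→1⁻} (1−q)^k ζ_q(k) = ζ(k). -/
open Filter Set

lemma QZ.pow_succ_le_descFactorial (n j : ℕ) : (n + 1) ^ j ≤ (n + j).descFactorial j := by
  have h := Nat.pow_sub_le_descFactorial (n + j) j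
  rwa [show n + j + 1 - j = n + 1 by omega] at h

lemma QZ.hasSum_descFactorial (j : ℕ) {t : ℝ} (ht : |t| < 1) :
    HasSum (fun d : ℕ => ((d + j).descFactorial j : ℝ) * t ^ d)
      ((j.factorial : ℝ) / (1 - t) ^ (j + 1)) := by
  have h := (hasSum_choose_mul_geometric_of_norm_lt_one j
    (by rwa [Real.norm_eq_abs] : ‖t‖ < 1)).mul_left (j.factorial : ℝ)
  convert h using 1
  · rfl
  · funext d
    rw [Nat.descFactorial_eq_factorial_mul_choose]
    push_cast
    ring
  · rw [mul_one_div]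

lemma QZ.norm_lt_one {t : ℝ} (ht0 : 0 ≤ t) (ht1 : t < 1) : ‖t‖ < 1 := by
  rwa [Real.norm_eq_abs, abs_of_nonneg ht0]

lemma QZ.F_summable (j : ℕ) {t : ℝ} (ht0 : 0 ≤ t) (ht1 : t < 1) :
    Summable (fun d : ℕ => (d : ℝ) ^ j * t ^ d) :=
  summable_pow_mul_geometric_of_norm_lt_one j (QZ.norm_lt_one ht0 ht1)

lemma QZ.F_le (j : ℕ) {t : ℝ} (ht0 : 0 ≤ t) (ht1 : t < 1) :
    ∑' d : ℕ, (d : ℝ) ^ j * t ^ d ≤ (j.factorial : ℝ) / (1 - t) ^ (j + 1) := by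
  have hd := QZ.hasSum_descFactorial j (QZ.norm_lt_one ht0 ht1)
  rw [← hd.tsum_eq]
  refine Summable.tsum_le_tsum (fun d => ?_) (QZ.F_summable j ht0 ht1) hd.summable
  have h1 : (d : ℝ) ^ j ≤ ((d + j).descFactorial j : ℝ) := by
    exact_mod_cast le_trans (Nat.pow_le_pow_left (Nat.le_succ d) j)
      (QZ.pow_succ_le_descFactorial d j)
  exact mul_le_mul_of_nonneg_right h1 (pow_nonneg ht0 d)

lemma QZ.le_F (j : ℕ) {t : ℝ} (ht0 : 0 ≤ t) (ht1 : t < 1) :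
    t ^ j * ((j.factorial : ℝ) / (1 - t) ^ (j + 1)) ≤ ∑' d : ℕ, (d : ℝ) ^ j * t ^ d := by
  have hd := (QZ.hasSum_descFactorial j (QZ.norm_lt_one ht0 ht1)).mul_left (t ^ j)
  have hd' : HasSum (fun d : ℕ => ((d + j).descFactorial j : ℝ) * t ^ (d + j))
      (t ^ j * ((j.factorial : ℝ) / (1 - t) ^ (j + 1))) := by
    refine hd.congr_fun fun d => ?_
    rw [pow_add]; ring
  have hzero : ∑ i ∈ Finset.range j, ((i.descFactorial j : ℝ) * t ^ i) = 0 := by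
    refine Finset.sum_eq_zero fun i hi => ?_
    rw [Nat.descFactorial_eq_zero_iff_lt.mpr (Finset.mem_range.mp hi)]
    simp
  have hfull : HasSum (fun d : ℕ => ((d.descFactorial j : ℝ) * t ^ d))
      (t ^ j * ((j.factorial : ℝ) / (1 - t) ^ (j + 1))) := by
    have := (hasSum_nat_add_iff (f := fun d : ℕ => ((d.descFactorial j : ℝ) * t ^ d)) j).mp hd'
    rwa [hzero, add_zero] at this
  rw [← hfull.tsum_eq]
  refine Summable.tsum_le_tsum (fun d => ?_) hfull.summable (QZ.F_summable j ht0 ht1)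
  exact mul_le_mul_of_nonneg_right (by exact_mod_cast Nat.descFactorial_le_pow d j)
    (pow_nonneg ht0 d)

lemma QZ.F_le' (j : ℕ) (hj : 1 ≤ j) {t : ℝ} (ht0 : 0 ≤ t) (ht1 : t < 1) :
    ∑' d : ℕ, (d : ℝ) ^ j * t ^ d ≤ t * ((j.factorial : ℝ) / (1 - t) ^ (j + 1)) := by
  have hs := QZ.F_summable j ht0 ht1
  have hd := QZ.hasSum_descFactorial j (QZ.norm_lt_one ht0 ht1)
  rw [Summable.tsum_eq_zero_add hs]
  have h0 : ((0 : ℕ) : ℝ) ^ j * t ^ 0 = 0 := by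
    simp [zero_pow (by omega : j ≠ 0)]
  rw [h0, zero_add]
  calc ∑' e : ℕ, ((e + 1 : ℕ) : ℝ) ^ j * t ^ (e + 1)
      ≤ ∑' e : ℕ, (((e + j).descFactorial j : ℝ) * t ^ e) * t := by
        refine Summable.tsum_le_tsum (fun e => ?_) ((summable_nat_add_iff 1).mpr hs)
          (hd.summable.mul_right t)
        rw [pow_succ, ← mul_assoc]
        refine mul_le_mul_of_nonneg_right (mul_le_mul_of_nonneg_right ?_ (pow_nonneg ht0 e))
          ht0
        exact_mod_cast QZ.pow_succ_le_descFactorial e j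
    _ = ((j.factorial : ℝ) / (1 - t) ^ (j + 1)) * t := by rw [tsum_mul_right, hd.tsum_eq]
    _ = t * ((j.factorial : ℝ) / (1 - t) ^ (j + 1)) := mul_comm _ _

lemma QZ.tendsto_C (j : ℕ) :
    Tendsto (fun t : ℝ => (1 - t) ^ (j + 1) * ∑' d : ℕ, (d : ℝ) ^ j * t ^ d)
      (nhdsWithin 1 (Set.Ioo 0 1)) (nhds (j.factorial : ℝ)) := by
  apply tendsto_of_tendsto_of_tendsto_of_le_of_le'
    (g := fun t : ℝ => t ^ j * (j.factorial : ℝ)) (h := fun _ => (j.factorial : ℝ))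
  · have hc : Continuous (fun t : ℝ => t ^ j * (j.factorial : ℝ)) :=
      (continuous_pow j).mul continuous_const
    have h := hc.tendsto (1 : ℝ)
    simp only [one_pow, one_mul] at h
    exact h.mono_left nhdsWithin_le_nhds
  · exact tendsto_const_nhds
  · filter_upwards [eventually_mem_nhdsWithin] with t ht
    obtain ⟨ht0, ht1⟩ := ht
    have h1t : (0 : ℝ) < 1 - t := by linarith
    have hpos : (0 : ℝ) < (1 - t) ^ (j + 1) := by positivity
    calc t ^ j * (j.factorial : ℝ)
        = (1 - t) ^ (j + 1) * (t ^ j * ((j.factorial : ℝ) / (1 - t) ^ (j + 1))) := by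
          field_simp
      _ ≤ (1 - t) ^ (j + 1) * ∑' d : ℕ, (d : ℝ) ^ j * t ^ d :=
          mul_le_mul_of_nonneg_left (QZ.le_F j ht0.le ht1) hpos.le
  · filter_upwards [eventually_mem_nhdsWithin] with t ht
    obtain ⟨ht0, ht1⟩ := ht
    have h1t : (0 : ℝ) < 1 - t := by linarith
    have hpos : (0 : ℝ) < (1 - t) ^ (j + 1) := by positivity
    calc (1 - t) ^ (j + 1) * ∑' d : ℕ, (d : ℝ) ^ j * t ^ d
        ≤ (1 - t) ^ (j + 1) * ((j.factorial : ℝ) / (1 - t) ^ (j + 1)) :=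
          mul_le_mul_of_nonneg_left (QZ.F_le j ht0.le ht1) hpos.le
      _ = (j.factorial : ℝ) := by field_simp

lemma QZ.hab (j m : ℕ) :
    Tendsto (fun q : ℝ => (1 - q) ^ (j + 1) *
        ((1 / (j.factorial : ℝ)) * ∑' d : ℕ, (d : ℝ) ^ j * (q ^ (m + 1)) ^ d))
      (nhdsWithin 1 (Set.Ioo 0 1)) (nhds (1 / ((m : ℝ) + 1) ^ (j + 1))) := by
  set M := m + 1 with hM
  have hMR : (0 : ℝ) < (M : ℝ) := by positivity
  have hcomp : Tendsto (fun q : ℝ => q ^ M) (nhdsWithin 1 (Set.Ioo 0 1))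
      (nhdsWithin 1 (Set.Ioo 0 1)) := by
    rw [tendsto_nhdsWithin_iff]
    constructor
    · have h := (continuous_pow M).tendsto (1 : ℝ)
      simp only [one_pow] at h
      exact h.mono_left nhdsWithin_le_nhds
    · filter_upwards [eventually_mem_nhdsWithin] with q hq
      exact ⟨pow_pos hq.1 M, pow_lt_one₀ hq.1.le hq.2 (by omega)⟩
  have h1 : Tendsto (fun q : ℝ => (1 - q ^ M) ^ (j + 1) * ∑' d : ℕ, (d : ℝ) ^ j * (q ^ M) ^ d)
      (nhdsWithin 1 (Set.Ioo 0 1)) (nhds (j.factorial : ℝ)) := (QZ.tendsto_C j).comp hcomp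
  have h2 : Tendsto (fun q : ℝ => (∑ i ∈ Finset.range M, q ^ i) ^ (j + 1))
      (nhdsWithin 1 (Set.Ioo 0 1)) (nhds (((M : ℝ)) ^ (j + 1))) := by
    have hc : Continuous (fun q : ℝ => (∑ i ∈ Finset.range M, q ^ i) ^ (j + 1)) :=
      (continuous_finset_sum _ fun i _ => continuous_pow i).pow (j + 1)
    have h := hc.tendsto (1 : ℝ)
    simp only [one_pow, Finset.sum_const, Finset.card_range, nsmul_eq_mul, mul_one] at h
    exact h.mono_left nhdsWithin_le_nhds
  have h3 := (h1.mul_const (1 / (j.factorial : ℝ))).div h2 (by positivity)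
  have hval : (j.factorial : ℝ) * (1 / (j.factorial : ℝ)) / ((M : ℝ)) ^ (j + 1)
      = 1 / ((m : ℝ) + 1) ^ (j + 1) := by
    have hMm : ((M : ℝ)) = (m : ℝ) + 1 := by push_cast [hM]; ring
    rw [hMm, mul_one_div, div_self (by positivity : (j.factorial : ℝ) ≠ 0)]
  rw [hval] at h3
  refine h3.congr' ?_
  filter_upwards [eventually_mem_nhdsWithin] with q hq
  obtain ⟨hq0, hq1⟩ := hq
  have hS : (0 : ℝ) < ∑ i ∈ Finset.range M, q ^ i :=
    Finset.sum_pos (fun i _ => pow_pos hq0 i) ⟨0, Finset.mem_range.mpr (by omega)⟩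
  have hgeom : 1 - q ^ M = (1 - q) * ∑ i ∈ Finset.range M, q ^ i := by
    have h := geom_sum_mul q M
    nlinarith [h]
  simp only [Pi.div_apply]
  rw [hgeom]
  field_simp
  rw [mul_pow]
  ring


lemma QZ.tsum_sigma_eq (j : ℕ) (hj : 1 ≤ j) {q : ℝ} (hq0 : 0 < q) (hq1 : q < 1) :
    ∑' n : ℕ, (∑ d ∈ n.divisors, (d : ℝ) ^ j) * q ^ n
      = ∑' m : ℕ, ∑' d : ℕ, (d : ℝ) ^ j * (q ^ (m + 1)) ^ d := by
  have hqn : ‖q‖ < 1 := by rwa [Real.norm_eq_abs, abs_of_pos hq0]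
  set G : ℕ × ℕ → ℝ := fun p => if p.1 = 0 then 0 else (p.2 : ℝ) ^ j * q ^ (p.1 * p.2) with hGdef
  have hGnn : ∀ p, 0 ≤ G p := by
    rintro ⟨m, d⟩
    simp only [hGdef]
    split
    · exact le_refl 0
    · positivity
  -- dominating summable function
  set H : ℕ × ℕ → ℝ := fun p => q⁻¹ * (q ^ p.1 * ((p.2 : ℝ) ^ j * q ^ p.2)) with hHdef
  have hH : Summable H := by
    have hf : Summable (fun m : ℕ => ‖q ^ m‖) := summable_norm_geometric_of_norm_lt_one hqn
    have hg : Summable (fun d : ℕ => ‖(d : ℝ) ^ j * q ^ d‖) :=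
      summable_norm_pow_mul_geometric_of_norm_lt_one j hqn
    exact (summable_mul_of_summable_norm hf hg).mul_left q⁻¹
  have hGle : ∀ p, G p ≤ H p := by
    rintro ⟨m, d⟩
    simp only [hGdef, hHdef]
    rcases Nat.eq_zero_or_pos m with rfl | hm
    · simp only [if_pos rfl]
      positivity
    rcases Nat.eq_zero_or_pos d with rfl | hd
    · rw [if_neg (by omega : ¬ (m, 0).1 = 0)]
      simp only [Nat.cast_zero, zero_pow (by omega : j ≠ 0), zero_mul]
      positivity
    rw [if_neg (by omega)]
    have hexp : m + d - 1 ≤ m * d := by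
      obtain ⟨s, rfl⟩ := Nat.exists_eq_add_of_le hm
      obtain ⟨e, rfl⟩ := Nat.exists_eq_add_of_le hd
      calc 1 + s + (1 + e) - 1 = s + e + 1 := by omega
        _ ≤ s * e + (s + e + 1) := Nat.le_add_left _ _
        _ = (1 + s) * (1 + e) := by ring
    have hpow : q ^ (m * d) ≤ q ^ (m + d - 1) :=
      pow_le_pow_of_le_one hq0.le hq1.le hexp
    have heq : q⁻¹ * (q ^ m * ((d : ℝ) ^ j * q ^ d)) = (d : ℝ) ^ j * q ^ (m + d - 1) := by
      have hqq : q ^ m * q ^ d = q ^ (m + d - 1) * q := by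
        rw [← pow_succ, ← pow_add]
        congr 1
        omega
      calc q⁻¹ * (q ^ m * ((d : ℝ) ^ j * q ^ d))
          = (d : ℝ) ^ j * (q ^ m * q ^ d) * q⁻¹ := by ring
        _ = (d : ℝ) ^ j * (q ^ (m + d - 1) * q) * q⁻¹ := by rw [hqq]
        _ = (d : ℝ) ^ j * q ^ (m + d - 1) := by field_simp
    rw [heq]
    exact mul_le_mul_of_nonneg_left hpow (by positivity)
  have hG : Summable G := Summable.of_nonneg_of_le hGnn hGle hH
  -- fiberwise sum
  have h1 : HasSum (fun n : ℕ => ∑' p : (fun p : ℕ × ℕ => p.1 * p.2) ⁻¹' {n}, G p)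
      (∑' p, G p) := hG.hasSum.tsum_fiberwise _
  have h2 : ∀ n : ℕ, (∑' p : (fun p : ℕ × ℕ => p.1 * p.2) ⁻¹' {n}, G p)
      = (∑ d ∈ n.divisors, (d : ℝ) ^ j) * q ^ n := by
    intro n
    rcases Nat.eq_zero_or_pos n with rfl | hn
    · have hz : ∀ p : (fun p : ℕ × ℕ => p.1 * p.2) ⁻¹' {(0 : ℕ)}, G p = 0 := by
        rintro ⟨⟨a, b⟩, hp⟩
        simp only [Set.mem_preimage, Set.mem_singleton_iff] at hp
        rcases Nat.mul_eq_zero.mp hp with rfl | rfl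
        · simp [hGdef]
        · simp [hGdef, zero_pow (by omega : j ≠ 0)]
      rw [tsum_congr hz, tsum_zero]
      simp
    · have hn' : n ≠ 0 := by omega
      have hset : (fun p : ℕ × ℕ => p.1 * p.2) ⁻¹' {n} = ↑n.divisorsAntidiagonal := by
        ext p
        simp [Nat.mem_divisorsAntidiagonal, hn']
      rw [hset, Finset.tsum_subtype' n.divisorsAntidiagonal G]
      have hterm : ∀ p ∈ n.divisorsAntidiagonal, G p = (p.2 : ℝ) ^ j * q ^ n := by
        intro p hp
        obtain ⟨h1', h2'⟩ := Nat.ne_zero_of_mem_divisorsAntidiagonal hp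
        rw [hGdef]
        simp only [if_neg h1', (Nat.mem_divisorsAntidiagonal.mp hp).1]
      rw [Finset.sum_congr rfl hterm,
        Nat.sum_divisorsAntidiagonal' (f := fun _ d : ℕ => (d : ℝ) ^ j * q ^ n),
        ← Finset.sum_mul]
  have h3 : HasSum (fun n : ℕ => (∑ d ∈ n.divisors, (d : ℝ) ^ j) * q ^ n) (∑' p, G p) := by
    rwa [funext h2] at h1
  rw [h3.tsum_eq, Summable.tsum_prod' hG (fun b => hG.prod_factor b)]
  have hinner : Summable (fun m : ℕ => ∑' d : ℕ, G (m, d)) := hG.prod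
  rw [Summable.tsum_eq_zero_add hinner]
  have hzero : ∑' d : ℕ, G (0, d) = 0 := by
    have : ∀ d : ℕ, G (0, d) = 0 := fun d => if_pos rfl
    rw [tsum_congr this, tsum_zero]
  rw [hzero, zero_add]
  refine tsum_congr fun m => tsum_congr fun d => ?_
  simp only [hGdef, if_neg (Nat.succ_ne_zero m), pow_mul]


lemma QZ.bern {q : ℝ} (hq0 : 0 < q) (hq1 : q ≤ 1) (a : ℕ) :
    q ^ a * (1 + (a : ℝ) * (1 - q)) ≤ 1 := by
  have hx0 : (0 : ℝ) ≤ (1 - q) / q := div_nonneg (by linarith) hq0.le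
  have h := one_add_mul_le_pow (a := (1 - q) / q) (by linarith) a
  have h1 : (1 : ℝ) + (1 - q) / q = 1 / q := by field_simp; ring
  rw [h1] at h
  have h2 : 1 + (a : ℝ) * (1 - q) ≤ 1 + (a : ℝ) * ((1 - q) / q) := by
    have : (1 - q) ≤ (1 - q) / q := by
      rw [le_div_iff₀ hq0]
      nlinarith
    nlinarith [Nat.cast_nonneg (α := ℝ) a]
  have h3 : 1 + (a : ℝ) * (1 - q) ≤ (1 / q) ^ a := le_trans h2 h
  calc q ^ a * (1 + (a : ℝ) * (1 - q)) ≤ q ^ a * (1 / q) ^ a :=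
        mul_le_mul_of_nonneg_left h3 (pow_nonneg hq0.le a)
    _ = 1 := by
        rw [← mul_pow, mul_one_div, div_self hq0.ne', one_pow]

set_option maxHeartbeats 1000000 in
lemma QZ.bound (j : ℕ) (hj : 1 ≤ j) {q : ℝ} (hq0 : 0 < q) (hq1 : q < 1) (hq2 : 1 / 2 ≤ q)
    (m : ℕ) :
    q ^ (m + 1) * ((1 - q) / (1 - q ^ (m + 1))) ^ (j + 1)
      ≤ 2 ^ (j + 5) * (1 / ((m : ℝ) + 1) ^ 2) := by
  set M := m + 1 with hMdef
  have hMm : ((M : ℝ)) = (m : ℝ) + 1 := by rw [hMdef]; push_cast; ring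
  have hM0 : (0 : ℝ) < (M : ℝ) := by rw [hMm]; positivity
  have hM1 : (1 : ℝ) ≤ (M : ℝ) := by rw [hMm]; nlinarith [Nat.cast_nonneg (α := ℝ) m]
  have hqM1 : q ^ M < 1 := pow_lt_one₀ hq0.le hq1 (by omega)
  have h1qM : (0 : ℝ) < 1 - q ^ M := by linarith
  have hb := QZ.bern hq0 hq1.le M
  rw [← hMm]
  set u := 1 - q with hudef
  have hu0 : 0 < u := by rw [hudef]; linarith
  have hu2 : u ≤ 1 / 2 := by rw [hudef]; linarith
  set r := u / (1 - q ^ M) with hrdef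
  have hr0 : 0 ≤ r := div_nonneg hu0.le h1qM.le
  have hr_le : r ≤ 1 / (M : ℝ) + u := by
    have h : u * (M : ℝ) ≤ (1 + (M : ℝ) * u) * (1 - q ^ M) := by nlinarith [hb]
    have h' : r ≤ (1 + (M : ℝ) * u) / (M : ℝ) := by
      rw [hrdef, div_le_div_iff₀ h1qM hM0]
      linarith
    have heq : (1 + (M : ℝ) * u) / (M : ℝ) = 1 / (M : ℝ) + u := by
      field_simp
    linarith [h']
  by_cases hcase : (M : ℝ) * u ≤ 1
  · -- small M case
    have hu_le : u ≤ 1 / (M : ℝ) := by rw [le_div_iff₀ hM0]; nlinarith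
    have hr2 : r ≤ 2 / (M : ℝ) := by
      have h2M : (2 : ℝ) / M = 1 / M + 1 / M := by ring
      linarith [hr_le]
    have hqM_le1 : q ^ M ≤ 1 := pow_le_one₀ hq0.le hq1.le
    have hMpow : (M : ℝ) ^ 2 ≤ (M : ℝ) ^ (j + 1) := pow_le_pow_right₀ hM1 (by omega)
    calc q ^ M * r ^ (j + 1) ≤ 1 * (2 / (M : ℝ)) ^ (j + 1) :=
          mul_le_mul hqM_le1 (pow_le_pow_left₀ hr0 hr2 _) (pow_nonneg hr0 _) zero_le_one
      _ = 2 ^ (j + 1) / (M : ℝ) ^ (j + 1) := by rw [one_mul, div_pow]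
      _ ≤ 2 ^ (j + 1) / (M : ℝ) ^ 2 := by
          rw [div_le_div_iff₀ (by positivity) (by positivity)]
          exact mul_le_mul_of_nonneg_left hMpow (by positivity)
      _ ≤ 2 ^ (j + 5) * (1 / (M : ℝ) ^ 2) := by
          rw [mul_one_div, div_le_div_iff₀ (by positivity) (by positivity)]
          exact mul_le_mul_of_nonneg_right
            (pow_le_pow_right₀ one_le_two (by omega)) (by positivity)
  · push_neg at hcase
    have hMgt : (2 : ℝ) < (M : ℝ) := by nlinarith
    have hMnat : 2 < M := by exact_mod_cast hMgt
    have ha1 : 1 ≤ M / 2 := by omega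
    have h2a : 2 * (M / 2) ≤ M := by omega
    have h4a : M ≤ 4 * (M / 2) := by omega
    set a := M / 2 with hadef
    have haR : (1 : ℝ) ≤ (a : ℝ) := by exact_mod_cast ha1
    have hqaM : q ^ M ≤ q ^ (2 * a) := pow_le_pow_of_le_one hq0.le hq1.le h2a
    have hMa : (M : ℝ) ≤ 4 * (a : ℝ) := by exact_mod_cast h4a
    have hba := QZ.bern hq0 hq1.le a
    rw [← hudef] at hba
    clear_value M u r a
    clear hadef hrdef hudef hMdef hb
    have hau : 0 < (a : ℝ) * u := by positivity
    have hqa : q ^ a ≤ 1 / ((a : ℝ) * u) := by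
      rw [le_div_iff₀ hau]
      nlinarith [pow_nonneg hq0.le a]
    have hqM : q ^ M ≤ (1 / ((a : ℝ) * u)) ^ 2 := by
      refine hqaM.trans ?_
      rw [mul_comm 2 a, pow_mul]
      exact pow_le_pow_left₀ (pow_nonneg hq0.le a) hqa 2
    have hMu0 : 0 < (M : ℝ) * u := by positivity
    have hMau : (M : ℝ) * u ≤ 4 * ((a : ℝ) * u) := by nlinarith
    have hqM' : q ^ M ≤ 16 / ((M : ℝ) * u) ^ 2 := by
      refine hqM.trans ?_
      rw [div_pow, one_pow, div_le_div_iff₀ (by positivity) (by positivity), one_mul,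
        pow_two, pow_two]
      calc ((M : ℝ) * u) * ((M : ℝ) * u) ≤ (4 * ((a : ℝ) * u)) * (4 * ((a : ℝ) * u)) :=
            mul_le_mul hMau hMau hMu0.le (by positivity)
        _ = 16 * ((a : ℝ) * u * ((a : ℝ) * u)) := by ring
    have hru : 1 / (M : ℝ) ≤ u := by
      rw [div_le_iff₀ hM0]
      calc (1:ℝ) ≤ (M : ℝ) * u := hcase.le
        _ = u * M := mul_comm _ _
    have hr2u : r ≤ 2 * u := by linarith [hr_le]
    have hupow : u ^ (j + 1) = u ^ (j - 1) * u ^ 2 := by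
      rw [← pow_add]
      congr 1
      omega
    have hMne : (M : ℝ) ≠ 0 := hM0.ne'
    have hune : u ≠ 0 := hu0.ne'
    calc q ^ M * r ^ (j + 1) ≤ (16 / ((M : ℝ) * u) ^ 2) * (2 * u) ^ (j + 1) :=
          mul_le_mul hqM' (pow_le_pow_left₀ hr0 hr2u _) (pow_nonneg hr0 _) (by positivity)
      _ = 16 * 2 ^ (j + 1) * u ^ (j - 1) / (M : ℝ) ^ 2 := by
          rw [mul_pow 2 u, mul_pow (M : ℝ) u, hupow]
          field_simp
      _ ≤ 16 * 2 ^ (j + 1) * 1 / (M : ℝ) ^ 2 := by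
          gcongr
          exact pow_le_one₀ hu0.le (by linarith)
      _ ≤ 2 ^ (j + 5) * (1 / (M : ℝ) ^ 2) := by
          rw [mul_one, mul_one_div]
          have h16 : (16 : ℝ) * 2 ^ (j + 1) = 2 ^ (j + 5) := by
            rw [show j + 5 = (j + 1) + 4 by omega, pow_add]
            ring
          rw [h16]


set_option maxHeartbeats 1000000 in
/-- For `k ≥ 2`, `lim_{q→1⁻} (1-q)^k ζ_q(k) = ζ(k)` for
`ζ_q(k) = (1/(k-1)!) ∑_{n>0} σ_{k-1}(n) q^n`. -/
theorem qZeta_limit (k : ℕ) (hk : 2 ≤ k) :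
    Filter.Tendsto
      (fun q : ℝ => (1 - q) ^ k *
        ((1 / (Nat.factorial (k - 1) : ℝ)) *
          ∑' n : ℕ, (∑ d ∈ n.divisors, (d : ℝ) ^ (k - 1)) * q ^ n))
      (nhdsWithin 1 (Set.Ioo 0 1))
      (nhds (∑' n : ℕ, if 0 < n then 1 / (n : ℝ) ^ k else 0)) := by
  obtain ⟨j, rfl⟩ : ∃ j, k = j + 1 := ⟨k - 1, by omega⟩
  have hj : 1 ≤ j := by omega
  simp only [Nat.add_sub_cancel]
  have hζ : (∑' n : ℕ, if 0 < n then 1 / (n : ℝ) ^ (j + 1) else 0)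
      = ∑' m : ℕ, 1 / ((m : ℝ) + 1) ^ (j + 1) := by
    have hsum : Summable (fun n : ℕ => 1 / (n : ℝ) ^ (j + 1)) :=
      Real.summable_one_div_nat_pow.mpr (by omega)
    have hfun : (fun n : ℕ => if 0 < n then 1 / (n : ℝ) ^ (j + 1) else 0)
        = fun n : ℕ => 1 / (n : ℝ) ^ (j + 1) := by
      funext n
      rcases Nat.eq_zero_or_pos n with rfl | hn
      · simp [zero_pow (by omega : j + 1 ≠ 0)]
      · rw [if_pos hn]
    rw [hfun, Summable.tsum_eq_zero_add hsum, Nat.cast_zero,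
      zero_pow (by omega : j + 1 ≠ 0), div_zero, zero_add]
    refine tsum_congr fun m => ?_
    push_cast
    ring
  rw [hζ]
  have main : Tendsto (fun q : ℝ => ∑' m : ℕ, ((1 - q) ^ (j + 1) *
      ((1 / (Nat.factorial j : ℝ)) * ∑' d : ℕ, (d : ℝ) ^ j * (q ^ (m + 1)) ^ d)))
      (nhdsWithin 1 (Set.Ioo 0 1)) (nhds (∑' m : ℕ, 1 / ((m : ℝ) + 1) ^ (j + 1))) := by
    apply tendsto_tsum_of_dominated_convergence
      (bound := fun m : ℕ => 2 ^ (j + 5) * (1 / ((m : ℝ) + 1) ^ 2))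
    · have h2 : Summable (fun n : ℕ => 1 / (n : ℝ) ^ 2) :=
        Real.summable_one_div_nat_pow.mpr one_lt_two
      have h3 : Summable (fun m : ℕ => 1 / ((m + 1 : ℕ) : ℝ) ^ 2) :=
        (summable_nat_add_iff 1).mpr h2
      have h4 : Summable (fun m : ℕ => 1 / ((m : ℝ) + 1) ^ 2) := by
        refine h3.congr fun m => ?_
        push_cast
        ring
      exact h4.mul_left _
    · exact fun m => QZ.hab j m
    · have hev2 : ∀ᶠ q : ℝ in nhdsWithin 1 (Set.Ioo 0 1), 1 / 2 ≤ q :=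
        Eventually.filter_mono nhdsWithin_le_nhds (eventually_ge_nhds (by norm_num))
      filter_upwards [eventually_mem_nhdsWithin, hev2] with q hq hq2
      intro m
      obtain ⟨hq0, hq1⟩ := hq
      have hM0 : 0 < q ^ (m + 1) := pow_pos hq0 _
      have hqM1 : q ^ (m + 1) < 1 := pow_lt_one₀ hq0.le hq1 (by omega)
      have h1q : (0 : ℝ) ≤ 1 - q := by linarith
      have hF0 : 0 ≤ ∑' d : ℕ, (d : ℝ) ^ j * (q ^ (m + 1)) ^ d :=
        tsum_nonneg fun d => by positivity
      have hnn : 0 ≤ (1 - q) ^ (j + 1) *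
          ((1 / (Nat.factorial j : ℝ)) * ∑' d : ℕ, (d : ℝ) ^ j * (q ^ (m + 1)) ^ d) := by
        positivity
      rw [Real.norm_eq_abs, abs_of_nonneg hnn]
      have hF := QZ.F_le' j hj (t := q ^ (m + 1)) hM0.le hqM1
      have h1qM : (0 : ℝ) < 1 - q ^ (m + 1) := by linarith
      calc (1 - q) ^ (j + 1) *
          ((1 / (Nat.factorial j : ℝ)) * ∑' d : ℕ, (d : ℝ) ^ j * (q ^ (m + 1)) ^ d)
          ≤ (1 - q) ^ (j + 1) * ((1 / (Nat.factorial j : ℝ)) *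
              (q ^ (m + 1) * ((Nat.factorial j : ℝ) / (1 - q ^ (m + 1)) ^ (j + 1)))) := by
            refine mul_le_mul_of_nonneg_left ?_ (by positivity)
            exact mul_le_mul_of_nonneg_left hF (by positivity)
        _ = q ^ (m + 1) * ((1 - q) / (1 - q ^ (m + 1))) ^ (j + 1) := by
            rw [div_pow]
            have hfac : (0:ℝ) < (Nat.factorial j : ℝ) := by positivity
            field_simp
        _ ≤ 2 ^ (j + 5) * (1 / ((m : ℝ) + 1) ^ 2) := QZ.bound j hj hq0 hq1 hq2 m
  refine main.congr' ?_
  filter_upwards [eventually_mem_nhdsWithin] with q hq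
  rw [QZ.tsum_sigma_eq j hj hq.1 hq.2, ← tsum_mul_left, ← tsum_mul_left]
end

section
/- Let k be even and let P ∈ V_k (homogeneous of degree k−2) be an even polynomial (P(−X,Y) = P(X,Y)) satisfying P(X,0) = P(0,Y) = 0 and P|(1+U+U²) = 0 where U = [[1,−1],[1,0]]. Write P(X+Y,X) = ∑_{r+s=k, r,s≥1} C(k−2,r−1) q_{r,s} X^{r−1} Y^{s−1}. Then q_{r,1} = q_{1,s} = 0 for all r,s. -/
/-- Let `P` be an even homogeneous polynomial of degree `k-2` (k even) with
`P(X,0) = P(0,Y) = 0` and `P|(1+U+U²) = 0`, and expand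
`P(X+Y,X) = ∑_{r+s=k} C(k-2,r-1) q_{r,s} X^{r-1} Y^{s-1}`.
Then `q_{r,1} = q_{1,s} = 0`. -/
theorem boundary_coefficients_vanish (k : ℕ) (hk : 4 ≤ k) (hke : Even k)
    (p : ℕ → ℂ) (P : ℂ → ℂ → ℂ)
    (hP : ∀ X Y : ℂ, P X Y = ∑ i ∈ Finset.range (k - 1), p i * X ^ i * Y ^ (k - 2 - i))
    (heven : ∀ X Y : ℂ, P (-X) Y = P X Y)
    (hX0 : ∀ X : ℂ, P X 0 = 0) (h0Y : ∀ Y : ℂ, P 0 Y = 0)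
    (hU : ∀ X Y : ℂ, P X Y + P (X - Y) X + P (-Y) (X - Y) = 0)
    (q : ℕ → ℕ → ℂ)
    (hq : ∀ X Y : ℂ, P (X + Y) X =
      ∑ r ∈ Finset.Icc 1 (k - 1),
        ((k - 2).choose (r - 1) : ℂ) * q r (k - r) * X ^ (r - 1) * Y ^ (k - r - 1)) :
    q (k - 1) 1 = 0 ∧ q 1 (k - 1) = 0 := by
  constructor
  · -- use P(1,1) = 0, from hU at (1,1)
    have hP11 : P 1 1 = 0 := by
      have := hU 1 1
      simp [h0Y, hX0] at this
      simpa using this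
    have h2 := hq 1 0
    rw [show (1:ℂ) + 0 = 1 by ring] at h2
    rw [hP11] at h2
    rw [Finset.sum_eq_single_of_mem (k - 1)] at h2
    · have hc : ((k - 2).choose (k - 1 - 1) : ℂ) = 1 := by
        rw [show k - 1 - 1 = k - 2 by omega, Nat.choose_self]; norm_num
      rw [hc, show k - (k - 1) = 1 by omega] at h2
      simp at h2
      exact h2.symm
    · simp [Finset.mem_Icc]; omega
    · intro r hr hrne
      have hr' := Finset.mem_Icc.mp hr
      have : k - r - 1 ≠ 0 := by omega
      simp [zero_pow this]
  · have h1 := hq 0 1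
    rw [show (0:ℂ) + 1 = 1 by ring] at h1
    rw [hX0] at h1
    rw [Finset.sum_eq_single_of_mem 1] at h1
    · simp at h1
      exact h1.symm
    · simp [Finset.mem_Icc]; omega
    · intro r hr hrne
      have hr' := Finset.mem_Icc.mp hr
      have : r - 1 ≠ 0 := by omega
      simp [zero_pow this]
end

section
/- For even k ≥ 4, as formal power series in q: ∑_{n>0} ⟨Y^{k−2} − X^{k−2}, T̃_n^{(3)}⟩ q^n = (k−3)! · q (d/dq) ζ_q(k−2) − (k−2)! ζ_q(k−1), where T̃_n^{(3)} = ∑_{ad=n, −a/2 < c ≤ a/2, c ≠ 0} [[a,0],[c,d]] and ⟨P, ∑ α_γ γ⟩ = ∑ α_γ P(b,d) for γ = [[a,b],[c,d]]. -/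
lemma card_filter_aux (a : ℕ) (ha : 1 ≤ a) :
    ((Finset.Icc (-(a : ℤ)) (a : ℤ)).filter
      (fun c => -(a : ℤ) < 2 * c ∧ 2 * c ≤ (a : ℤ) ∧ c ≠ 0)).card = a - 1 := by
  have ha' : (1 : ℤ) ≤ (a : ℤ) := by exact_mod_cast ha
  have h : ((Finset.Icc (-(a : ℤ)) (a : ℤ)).filter
      (fun c => -(a : ℤ) < 2 * c ∧ 2 * c ≤ (a : ℤ) ∧ c ≠ 0))
      = Finset.Icc (-(((a : ℤ) - 1) / 2)) ((a : ℤ) / 2) \ {0} := by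
    ext c
    simp only [Finset.mem_filter, Finset.mem_Icc, Finset.mem_sdiff, Finset.mem_singleton]
    omega
  have h0 : (0 : ℤ) ∈ Finset.Icc (-(((a : ℤ) - 1) / 2)) ((a : ℤ) / 2) := by
    simp only [Finset.mem_Icc]; omega
  rw [h, Finset.sdiff_singleton_eq_erase, Finset.card_erase_of_mem h0, Int.card_Icc]
  have h2 : (a : ℤ) / 2 + 1 - -(((a : ℤ) - 1) / 2) = (a : ℤ) := by omega
  rw [h2]
  omega

/-- For even `k ≥ 4` and `n ≥ 1`, the `n`-th coefficient of
`∑_{n>0} ⟨Y^{k-2} - X^{k-2}, T̃_n^{(3)}⟩ qⁿ` equals the `n`-th coefficient of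
`(k-3)! · q d/dq ζ_q(k-2) - (k-2)! ζ_q(k-1)`, where
`T̃_n^{(3)} = ∑_{ad=n, -a/2<c≤a/2, c≠0} [[a,0],[c,d]]` and `⟨P,γ⟩ = P(b,d)`.
Here the `n`-th coefficient of `ζ_q(m)` is `σ_{m-1}(n)/(m-1)!`. -/
theorem pairing_T3 (k : ℕ) (hk : 4 ≤ k) (hke : Even k) (n : ℕ) (hn : 1 ≤ n) :
    ∑ a ∈ n.divisors,
        ∑ c ∈ (Finset.Icc (-(a : ℤ)) (a : ℤ)).filter
          (fun c => -(a : ℤ) < 2 * c ∧ 2 * c ≤ (a : ℤ) ∧ c ≠ 0),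
          (((n / a : ℕ) : ℚ) ^ (k - 2) - (0 : ℚ) ^ (k - 2))
      = ((k - 3).factorial : ℚ) *
          ((n : ℚ) * ((∑ d ∈ n.divisors, (d : ℚ) ^ (k - 3)) / ((k - 3).factorial : ℚ)))
        - ((k - 2).factorial : ℚ) *
          ((∑ d ∈ n.divisors, (d : ℚ) ^ (k - 2)) / ((k - 2).factorial : ℚ)) := by
  have hk3 : k - 2 = (k - 3) + 1 := by omega
  have hf3 : ((k - 3).factorial : ℚ) ≠ 0 := Nat.cast_ne_zero.2 (k - 3).factorial_ne_zero
  have hf2 : ((k - 2).factorial : ℚ) ≠ 0 := Nat.cast_ne_zero.2 (k - 2).factorial_ne_zero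
  have hR1 : ((k - 3).factorial : ℚ) *
      ((n : ℚ) * ((∑ d ∈ n.divisors, (d : ℚ) ^ (k - 3)) / ((k - 3).factorial : ℚ)))
      = (n : ℚ) * ∑ d ∈ n.divisors, (d : ℚ) ^ (k - 3) := by
    field_simp
  have hR2 : ((k - 2).factorial : ℚ) *
      ((∑ d ∈ n.divisors, (d : ℚ) ^ (k - 2)) / ((k - 2).factorial : ℚ))
      = ∑ d ∈ n.divisors, (d : ℚ) ^ (k - 2) := by
    field_simp
  rw [hR1, hR2]
  have h0 : (0 : ℚ) ^ (k - 2) = 0 := zero_pow (by omega)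
  have hL : ∀ a ∈ n.divisors,
      ∑ c ∈ (Finset.Icc (-(a : ℤ)) (a : ℤ)).filter
          (fun c => -(a : ℤ) < 2 * c ∧ 2 * c ≤ (a : ℤ) ∧ c ≠ 0),
          (((n / a : ℕ) : ℚ) ^ (k - 2) - (0 : ℚ) ^ (k - 2))
      = (n : ℚ) * ((n / a : ℕ) : ℚ) ^ (k - 3) - ((n / a : ℕ) : ℚ) ^ (k - 2) := by
    intro a ha
    obtain ⟨hdvd, hn0⟩ := Nat.mem_divisors.1 ha
    have ha1 : 1 ≤ a := Nat.pos_of_mem_divisors ha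
    rw [Finset.sum_const, card_filter_aux a ha1, nsmul_eq_mul, h0, sub_zero]
    have hcast : ((a - 1 : ℕ) : ℚ) = (a : ℚ) - 1 := by
      rw [Nat.cast_sub ha1, Nat.cast_one]
    rw [hcast, sub_mul, one_mul]
    congr 1
    have hmul : (a : ℚ) * ((n / a : ℕ) : ℚ) = (n : ℚ) := by
      rw [← Nat.cast_mul, Nat.mul_div_cancel' hdvd]
    rw [hk3, pow_succ]
    calc (a : ℚ) * (((n / a : ℕ) : ℚ) ^ (k - 3) * ((n / a : ℕ) : ℚ))
        = ((a : ℚ) * ((n / a : ℕ) : ℚ)) * ((n / a : ℕ) : ℚ) ^ (k - 3) := by ring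
      _ = (n : ℚ) * ((n / a : ℕ) : ℚ) ^ (k - 3) := by rw [hmul]
  rw [Finset.sum_congr rfl hL, Finset.sum_sub_distrib, ← Finset.mul_sum]
  congr 1
  · congr 1
    exact Nat.sum_div_divisors n (fun d => (d : ℚ) ^ (k - 3))
  · exact Nat.sum_div_divisors n (fun d => (d : ℚ) ^ (k - 2))
end

section
/- For integers r ≥ 1, s ≥ 2 with k = r + s, the double-sum identity ∑_{a,d>0, 0<b≤d/2} b^{r−1} d^{s−1} q^{ad} = ((k−1)!/(r·2^r)) ζ_q(k) + ∑_{j=1}^{r−1} C(r,j) (B_j (k−j−1)!/(r 2^{r−j})) ζ_q(k−j) + ∑_{0≤j≤r−1, 1≤l≤r−j} C(r,j) C(r−j,l) ((−1)^l B_j (k−j−l−1)!/(r 2^{r−j})) ζ_q^{o}(k−j−l) holds as formal power series in q. -/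
open Finset

lemma faulhaber_Icc (n p : ℕ) :
    ∑ b ∈ Icc 1 n, (b : ℚ) ^ p =
      ∑ i ∈ range (p + 1), bernoulli' i * (p + 1).choose i * (n : ℚ) ^ (p + 1 - i) / (p + 1) := by
  rw [← Finset.Ico_add_one_right_eq_Icc]
  exact sum_Ico_pow n p

lemma half_pow (d m : ℕ) :
    ((d / 2 : ℕ) : ℚ) ^ m =
      (d : ℚ) ^ m / 2 ^ m +
        (if Odd d then (1 : ℚ) else 0) *
          ∑ l ∈ Icc 1 m, (m.choose l : ℚ) * (-1) ^ l * (d : ℚ) ^ (m - l) / 2 ^ m := by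
  have hins : range (m + 1) = insert 0 (Icc 1 m) := by
    ext x; simp [Finset.mem_Icc, Nat.lt_succ_iff]; omega
  have h2m : (2 : ℚ) ^ m ≠ 0 := by positivity
  rcases Nat.even_or_odd d with he | ho
  · obtain ⟨t, rfl⟩ := he
    have h2 : (t + t) / 2 = t := by omega
    have hno : ¬ Odd (t + t) := by simp [Nat.odd_iff]; omega
    rw [h2, if_neg hno, zero_mul, add_zero, eq_div_iff h2m]
    push_cast; ring
  · obtain ⟨t, rfl⟩ := ho
    have h2 : (2 * t + 1) / 2 = t := by omega
    rw [h2, if_pos ⟨t, by ring⟩, one_mul]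
    have key : (2 : ℚ) ^ m * (t : ℚ) ^ m
        = ∑ l ∈ range (m + 1), (-1 : ℚ) ^ l * ((2 * t + 1 : ℕ) : ℚ) ^ (m - l) * m.choose l := by
      rw [← add_pow]; push_cast; ring
    rw [hins, Finset.sum_insert (by simp)] at key
    simp only [pow_zero, one_mul, Nat.choose_zero_right, Nat.cast_one, mul_one, Nat.sub_zero]
      at key
    rw [← Finset.sum_div, ← add_div, eq_div_iff h2m]
    have hs : ∑ l ∈ Icc 1 m, (m.choose l : ℚ) * (-1) ^ l * ((2 * t + 1 : ℕ) : ℚ) ^ (m - l)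
        = ∑ l ∈ Icc 1 m, (-1 : ℚ) ^ l * ((2 * t + 1 : ℕ) : ℚ) ^ (m - l) * m.choose l :=
      Finset.sum_congr rfl (fun _ _ => by ring)
    rw [hs]; linarith [key]

lemma per_d (r s : ℕ) (hr : 1 ≤ r) (hs : 2 ≤ s) (d : ℕ) :
    ∑ b ∈ (Icc 1 d).filter (fun b => 2 * b ≤ d), (b : ℚ) ^ (r - 1) * (d : ℚ) ^ (s - 1)
      = (∑ j ∈ range r,
          (r.choose j : ℚ) * bernoulli' j / ((r : ℚ) * 2 ^ (r - j)) * (d : ℚ) ^ (r + s - j - 1))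
        + (if Odd d then (1 : ℚ) else 0) *
            ∑ j ∈ range r, ∑ l ∈ Icc 1 (r - j),
              (r.choose j : ℚ) * ((r - j).choose l : ℚ) * (-1 : ℚ) ^ l * bernoulli' j /
                  ((r : ℚ) * 2 ^ (r - j)) * (d : ℚ) ^ (r + s - j - l - 1) := by
  have hfil : (Icc 1 d).filter (fun b => 2 * b ≤ d) = Icc 1 (d / 2) := by
    ext b; simp only [Finset.mem_filter, Finset.mem_Icc]; omega
  have hr1 : r - 1 + 1 = r := by omega
  have hrc : ((r - 1 : ℕ) : ℚ) + 1 = (r : ℚ) := by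
    rw [Nat.cast_sub hr]; ring
  set ε : ℚ := if Odd d then (1 : ℚ) else 0 with hε
  calc
    ∑ b ∈ (Icc 1 d).filter (fun b => 2 * b ≤ d), (b : ℚ) ^ (r - 1) * (d : ℚ) ^ (s - 1)
        = (∑ b ∈ Icc 1 (d / 2), (b : ℚ) ^ (r - 1)) * (d : ℚ) ^ (s - 1) := by
          rw [hfil, Finset.sum_mul]
    _ = (∑ j ∈ range r,
          bernoulli' j * (r.choose j : ℚ) * ((d / 2 : ℕ) : ℚ) ^ (r - j) / (r : ℚ)) *
            (d : ℚ) ^ (s - 1) := by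
          rw [faulhaber_Icc (d / 2) (r - 1), hr1, hrc]
    _ = ∑ j ∈ range r,
          bernoulli' j * (r.choose j : ℚ) * ((d / 2 : ℕ) : ℚ) ^ (r - j) / (r : ℚ) *
            (d : ℚ) ^ (s - 1) := by rw [Finset.sum_mul]
    _ = ∑ j ∈ range r,
          ((r.choose j : ℚ) * bernoulli' j / ((r : ℚ) * 2 ^ (r - j)) *
              ((d : ℚ) ^ (r - j) * (d : ℚ) ^ (s - 1))
            + ε * ∑ l ∈ Icc 1 (r - j),
                (r.choose j : ℚ) * ((r - j).choose l : ℚ) * (-1 : ℚ) ^ l * bernoulli' j /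
                    ((r : ℚ) * 2 ^ (r - j)) * ((d : ℚ) ^ (r - j - l) * (d : ℚ) ^ (s - 1))) := by
          refine Finset.sum_congr rfl (fun j hj => ?_)
          rw [half_pow d (r - j), ← hε]
          rw [mul_add, add_div, add_mul]
          congr 1
          · ring
          · rw [show bernoulli' j * (r.choose j : ℚ) *
                  (ε * ∑ l ∈ Icc 1 (r - j),
                    ((r - j).choose l : ℚ) * (-1) ^ l * (d : ℚ) ^ (r - j - l) / 2 ^ (r - j)) /
                  (r : ℚ) * (d : ℚ) ^ (s - 1)
                = ε * ((∑ l ∈ Icc 1 (r - j),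
                    ((r - j).choose l : ℚ) * (-1) ^ l * (d : ℚ) ^ (r - j - l) / 2 ^ (r - j)) *
                    (bernoulli' j * (r.choose j : ℚ) / (r : ℚ) * (d : ℚ) ^ (s - 1))) from by
                  ring, Finset.sum_mul]
            congr 1
            refine Finset.sum_congr rfl (fun l hl => ?_)
            ring
    _ = (∑ j ∈ range r,
          (r.choose j : ℚ) * bernoulli' j / ((r : ℚ) * 2 ^ (r - j)) *
            ((d : ℚ) ^ (r - j) * (d : ℚ) ^ (s - 1)))
        + ε * ∑ j ∈ range r, ∑ l ∈ Icc 1 (r - j),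
            (r.choose j : ℚ) * ((r - j).choose l : ℚ) * (-1 : ℚ) ^ l * bernoulli' j /
                ((r : ℚ) * 2 ^ (r - j)) * ((d : ℚ) ^ (r - j - l) * (d : ℚ) ^ (s - 1)) := by
          rw [Finset.sum_add_distrib, Finset.mul_sum]
    _ = _ := by
          congr 1
          · refine Finset.sum_congr rfl (fun j hj => ?_)
            rw [← pow_add]
            congr 2
            simp only [Finset.mem_range] at hj
            omega
          · congr 1
            refine Finset.sum_congr rfl (fun j hj => ?_)
            refine Finset.sum_congr rfl (fun l hl => ?_)
            rw [← pow_add]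
            congr 2
            simp only [Finset.mem_range] at hj
            simp only [Finset.mem_Icc] at hl
            omega


/-- Coefficientwise identity (at `qᴺ`, `N ≥ 1`) of
`∑_{a,d>0, 0<b≤d/2} b^{r-1} d^{s-1} q^{ad}
 = ((k-1)!/(r 2^r)) ζ_q(k) + ∑_{j=1}^{r-1} C(r,j) B_j (k-j-1)!/(r 2^{r-j}) ζ_q(k-j)
 + ∑_{0≤j≤r-1, 1≤l≤r-j} C(r,j) C(r-j,l) (-1)^l B_j (k-j-l-1)!/(r 2^{r-j}) ζ_q^o(k-j-l)`,
where `k = r+s`, `B_j = bernoulli' j` (so `B₁ = 1/2`), the `N`-th coefficient of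
`ζ_q(m)` is `σ_{m-1}(N)/(m-1)!` and that of `ζ_q^o(m)` is
`(∑_{d|N, d odd} d^{m-1})/(m-1)!`. -/
theorem coeff_halfrange_sum (r s : ℕ) (hr : 1 ≤ r) (hs : 2 ≤ s) (N : ℕ) (hN : 1 ≤ N) :
    ∑ a ∈ N.divisors, ∑ b ∈ (Finset.Icc 1 (N / a)).filter (fun b => 2 * b ≤ N / a),
        (b : ℚ) ^ (r - 1) * ((N / a : ℕ) : ℚ) ^ (s - 1)
      = (((r + s - 1).factorial : ℚ) / ((r : ℚ) * 2 ^ r)) *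
          ((∑ d ∈ N.divisors, (d : ℚ) ^ (r + s - 1)) / ((r + s - 1).factorial : ℚ))
        + (∑ j ∈ Finset.Icc 1 (r - 1),
            (r.choose j : ℚ) * bernoulli' j *
              ((r + s - j - 1).factorial : ℚ) / ((r : ℚ) * 2 ^ (r - j)) *
              ((∑ d ∈ N.divisors, (d : ℚ) ^ (r + s - j - 1)) /
                ((r + s - j - 1).factorial : ℚ)))
        + (∑ j ∈ Finset.range r, ∑ l ∈ Finset.Icc 1 (r - j),
            (r.choose j : ℚ) * ((r - j).choose l : ℚ) * (-1 : ℚ) ^ l * bernoulli' j *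
              ((r + s - j - l - 1).factorial : ℚ) / ((r : ℚ) * 2 ^ (r - j)) *
              ((∑ d ∈ N.divisors.filter (fun d => Odd d), (d : ℚ) ^ (r + s - j - l - 1)) /
                ((r + s - j - l - 1).factorial : ℚ))) := by
  classical
  have hr0 : (r : ℚ) ≠ 0 := by exact_mod_cast (by omega : r ≠ 0)
  have step1 : (∑ a ∈ N.divisors, ∑ b ∈ (Finset.Icc 1 (N / a)).filter (fun b => 2 * b ≤ N / a),
        (b : ℚ) ^ (r - 1) * ((N / a : ℕ) : ℚ) ^ (s - 1))
      = ∑ d ∈ N.divisors, ∑ b ∈ (Icc 1 d).filter (fun b => 2 * b ≤ d),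
          (b : ℚ) ^ (r - 1) * (d : ℚ) ^ (s - 1) :=
    Nat.sum_div_divisors N (fun d => ∑ b ∈ (Icc 1 d).filter (fun b => 2 * b ≤ d),
      (b : ℚ) ^ (r - 1) * (d : ℚ) ^ (s - 1))
  rw [step1, Finset.sum_congr rfl (fun d _ => per_d r s hr hs d), Finset.sum_add_distrib]
  have hA : ∑ d ∈ N.divisors, ∑ j ∈ range r,
        (r.choose j : ℚ) * bernoulli' j / ((r : ℚ) * 2 ^ (r - j)) * (d : ℚ) ^ (r + s - j - 1)
      = (((r + s - 1).factorial : ℚ) / ((r : ℚ) * 2 ^ r)) *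
          ((∑ d ∈ N.divisors, (d : ℚ) ^ (r + s - 1)) / ((r + s - 1).factorial : ℚ))
        + ∑ j ∈ Finset.Icc 1 (r - 1),
            (r.choose j : ℚ) * bernoulli' j *
              ((r + s - j - 1).factorial : ℚ) / ((r : ℚ) * 2 ^ (r - j)) *
              ((∑ d ∈ N.divisors, (d : ℚ) ^ (r + s - j - 1)) /
                ((r + s - j - 1).factorial : ℚ)) := by
    rw [Finset.sum_comm]
    have hsplit : range r = insert 0 (Icc 1 (r - 1)) := by
      ext x; simp only [Finset.mem_range, Finset.mem_insert, Finset.mem_Icc]; omega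
    rw [hsplit, Finset.sum_insert (by simp)]
    congr 1
    · have hf : (((r + s - 1).factorial : ℚ)) ≠ 0 := by
        exact_mod_cast (r + s - 1).factorial_ne_zero
      rw [← Finset.mul_sum]
      simp only [Nat.choose_zero_right, Nat.cast_one, bernoulli'_zero, Nat.sub_zero]
      rw [div_mul_div_comm, mul_comm (((r + s - 1).factorial : ℚ)), mul_div_mul_right _ _ hf]
      ring
    · refine Finset.sum_congr rfl (fun j hj => ?_)
      have hf : (((r + s - j - 1).factorial : ℚ)) ≠ 0 := by
        exact_mod_cast (r + s - j - 1).factorial_ne_zero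
      have h2 : ((r : ℚ) * 2 ^ (r - j)) ≠ 0 := by positivity
      rw [← Finset.mul_sum, div_mul_eq_mul_div]
      field_simp
  have hB : ∑ d ∈ N.divisors, (if Odd d then (1 : ℚ) else 0) *
        ∑ j ∈ range r, ∑ l ∈ Icc 1 (r - j),
          (r.choose j : ℚ) * ((r - j).choose l : ℚ) * (-1 : ℚ) ^ l * bernoulli' j /
              ((r : ℚ) * 2 ^ (r - j)) * (d : ℚ) ^ (r + s - j - l - 1)
      = ∑ j ∈ Finset.range r, ∑ l ∈ Finset.Icc 1 (r - j),
          (r.choose j : ℚ) * ((r - j).choose l : ℚ) * (-1 : ℚ) ^ l * bernoulli' j *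
            ((r + s - j - l - 1).factorial : ℚ) / ((r : ℚ) * 2 ^ (r - j)) *
            ((∑ d ∈ N.divisors.filter (fun d => Odd d), (d : ℚ) ^ (r + s - j - l - 1)) /
              ((r + s - j - l - 1).factorial : ℚ)) := by
    have hite : ∀ d ∈ N.divisors, (if Odd d then (1 : ℚ) else 0) *
          (∑ j ∈ range r, ∑ l ∈ Icc 1 (r - j),
            (r.choose j : ℚ) * ((r - j).choose l : ℚ) * (-1 : ℚ) ^ l * bernoulli' j /
                ((r : ℚ) * 2 ^ (r - j)) * (d : ℚ) ^ (r + s - j - l - 1))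
        = if Odd d then (∑ j ∈ range r, ∑ l ∈ Icc 1 (r - j),
            (r.choose j : ℚ) * ((r - j).choose l : ℚ) * (-1 : ℚ) ^ l * bernoulli' j /
                ((r : ℚ) * 2 ^ (r - j)) * (d : ℚ) ^ (r + s - j - l - 1)) else 0 := by
      intro d _; split <;> simp
    rw [Finset.sum_congr rfl hite, ← Finset.sum_filter, Finset.sum_comm]
    refine Finset.sum_congr rfl (fun j hj => ?_)
    rw [Finset.sum_comm]
    refine Finset.sum_congr rfl (fun l hl => ?_)
    have hf : (((r + s - j - l - 1).factorial : ℚ)) ≠ 0 := by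
      exact_mod_cast (r + s - j - l - 1).factorial_ne_zero
    have h2 : ((r : ℚ) * 2 ^ (r - j)) ≠ 0 := by positivity
    rw [← Finset.mul_sum, div_mul_eq_mul_div]
    field_simp
  rw [hA, hB]
end
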